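/- Let p : E → B be a weak fibration of ∞-bicategories and x,z objects of E, and let p^▷_{x,z} : Map^▷_E(x,z) → Map^▷_B(px,pz) be the induced map of slice mapping ∞-categories, obtained by base change of E_{/z} → E ×_B B_{/pz} along {x} ×_B B_{/pz}. For a triangle σ : Δ² → E with σ|_{Δ^{0,1}} degenerate: if σ is left p-inner then the corresponding edge of Map^▷_E(x,z) is p^▷_{x,z}-cartesian, and if σ is left p-outer then the corresponding edge is p^▷_{x,z}-cocartesian. In particular, if p is a left inner 2-fibration then p^▷_{x,z} is a cartesian fibration of ∞-categories, and if p is a left outer 2-fibration then p^▷_{x,z} is a cocartesian fibration of ∞-categories. -/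

import Mathlib

open CategoryTheory Simplicial Opposite
namespace Paper2Fib



def DegEdge (X : SSet) (e : X _⦋1⦌) : Prop :=
  ∃ x : X _⦋0⦌, e = X.map (SimplexCategory.σ (0 : Fin 1)).op x

def DegTri (X : SSet) (σ : X _⦋2⦌) : Prop :=
  ∃ e : X _⦋1⦌, σ = X.map (SimplexCategory.σ (0 : Fin 2)).op e ∨
    σ = X.map (SimplexCategory.σ (1 : Fin 2)).op e

structure SScaled : Type 1 where
  carrier : SSet.{0}
  thin : Set (carrier _⦋2⦌)
  deg_thin : ∀ σ : carrier _⦋2⦌, DegTri carrier σ → σ ∈ thin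

structure SHom (X Y : SScaled) where
  toHom : X.carrier ⟶ Y.carrier
  thin_of : ∀ σ ∈ X.thin, toHom.app (op ⦋2⦌) σ ∈ Y.thin

theorem SHom.ext' {X Y : SScaled} {f g : SHom X Y} (h : f.toHom = g.toHom) : f = g := by
  cases f; cases g; simpa using h

instance : Category SScaled where
  Hom := SHom
  id X := ⟨𝟙 X.carrier, fun _ h => h⟩
  comp f g := ⟨f.toHom ≫ g.toHom, fun σ h => g.thin_of _ (f.thin_of σ h)⟩
  id_comp f := SHom.ext' (by simp)
  comp_id f := SHom.ext' (by simp)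
  assoc f g h := SHom.ext' (by simp)

@[simp] theorem comp_toHom {X Y Z : SScaled} (f : X ⟶ Y) (g : Y ⟶ Z) :
    (f ≫ g).toHom = f.toHom ≫ g.toHom := rfl

@[simp] theorem id_toHom (X : SScaled) : SHom.toHom (𝟙 X) = 𝟙 X.carrier := rfl

def eSrc (X : SSet) (e : X _⦋1⦌) : X _⦋0⦌ := X.map (SimplexCategory.δ (1 : Fin 2)).op e
def eTgt (X : SSet) (e : X _⦋1⦌) : X _⦋0⦌ := X.map (SimplexCategory.δ (0 : Fin 2)).op e
def tFace (X : SSet) (i : Fin 3) (σ : X _⦋2⦌) : X _⦋1⦌ := X.map (SimplexCategory.δ i).op σ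
def dFace (X : SSet) (i : Fin 4) (ρ : X _⦋3⦌) : X _⦋2⦌ := X.map (SimplexCategory.δ i).op ρ
def degAt (X : SSet) (x : X _⦋0⦌) : X _⦋1⦌ := X.map (SimplexCategory.σ (0 : Fin 1)).op x

def tetraEdge (X : SSet) (ρ : X _⦋3⦌) (i j : Fin 4) (hij : i ≤ j) : X _⦋1⦌ :=
  X.map (SimplexCategory.mkHom ⟨![i, j], by
    rw [Fin.monotone_iff_le_succ]
    simpa [Fin.forall_fin_one] using hij⟩).op ρ

/-! ### Scaled simplices and horns -/

def SDelta (n : ℕ) (T : Set (Δ[n] _⦋2⦌)) : SScaled :=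
  ⟨Δ[n], {σ | DegTri Δ[n] σ} ∪ T, fun _ h => Or.inl h⟩

def SHorn (n : ℕ) (i : Fin (n + 1)) (T : Set (Δ[n] _⦋2⦌)) : SScaled :=
  ⟨Λ[n, i], {σ | DegTri Δ[n] σ.1 ∨ σ.1 ∈ T}, by
    rintro σ ⟨e, h | h⟩
    · exact Or.inl ⟨e.1, Or.inl (congrArg Subtype.val h)⟩
    · exact Or.inl ⟨e.1, Or.inr (congrArg Subtype.val h)⟩⟩

def sHornIncl (n : ℕ) (i : Fin (n + 1)) (T : Set (Δ[n] _⦋2⦌)) :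
    SHorn n i T ⟶ SDelta n T :=
  ⟨(SSet.horn n i).ι, fun σ h => h.elim Or.inl Or.inr⟩

/-- The triangle `Δ^{i-1,i,i+1}` used to scale inner horns. -/
def innerScale (n i : ℕ) (h0 : 0 < i) (hn : i < n) : Set (Δ[n] _⦋2⦌) :=
  {SSet.stdSimplex.triangle (n := n) ⟨i - 1, by omega⟩ ⟨i, by omega⟩ ⟨i + 1, by omega⟩
    (Fin.mk_le_mk.mpr (by omega)) (Fin.mk_le_mk.mpr (by omega))}

/-- The scaling `{Δ^{0,1,n}}`. -/
def scale01n (n : ℕ) (h : 1 ≤ n) : Set (Δ[n] _⦋2⦌) :=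
  {SSet.stdSimplex.triangle (n := n) ⟨0, by omega⟩ ⟨1, by omega⟩ ⟨n, by omega⟩
    (Fin.mk_le_mk.mpr (by omega)) (Fin.mk_le_mk.mpr (by omega))}

/-- The scaling `{Δ^{0,n-1,n}}`. -/
def scale0nn (n : ℕ) (h : 1 ≤ n) : Set (Δ[n] _⦋2⦌) :=
  {SSet.stdSimplex.triangle (n := n) ⟨0, by omega⟩ ⟨n - 1, by omega⟩ ⟨n, by omega⟩
    (Fin.mk_le_mk.mpr (by omega)) (Fin.mk_le_mk.mpr (by omega))}

/-- The edge `Δ^{0,1}` of `Δ[n]`. -/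
def e01 (n : ℕ) (h : 1 ≤ n) : Δ[n] _⦋1⦌ :=
  SSet.stdSimplex.edge n ⟨0, by omega⟩ ⟨1, by omega⟩ (Fin.mk_le_mk.mpr (by omega))

/-- The edge `Δ^{n-1,n}` of `Δ[n]`. -/
def eN (n : ℕ) (h : 1 ≤ n) : Δ[n] _⦋1⦌ :=
  SSet.stdSimplex.edge n ⟨n - 1, by omega⟩ ⟨n, by omega⟩ (Fin.mk_le_mk.mpr (by omega))

/-- The triangle `Δ^{a,b,c}` of `Δ[n]` (given by natural number indices). -/
def triN (n a b c : ℕ) (hab : a ≤ b) (hbc : b ≤ c) (hc : c ≤ n) : Δ[n] _⦋2⦌ :=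
  SSet.stdSimplex.triangle (n := n) ⟨a, by omega⟩ ⟨b, by omega⟩ ⟨c, by omega⟩
    (Fin.mk_le_mk.mpr hab) (Fin.mk_le_mk.mpr hbc)

/-- Existence of a (strict) solution to a lifting problem of scaled simplicial sets. -/
def HasSLift {A B X Y : SScaled} (i : A ⟶ B) (p : X ⟶ Y) (u : A ⟶ X) (v : B ⟶ Y) : Prop :=
  ∃ w : B ⟶ X, i ≫ w = u ∧ w ≫ p = v

/-- Existence of a (strict) solution to a lifting problem of simplicial sets. -/
def PlainLift {A B X Y : SSet} (i : A ⟶ B) (p : X ⟶ Y) (u : A ⟶ X) (v : B ⟶ Y) : Prop :=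
  ∃ w : B ⟶ X, i ≫ w = u ∧ w ≫ p = v

/-! ### Weak fibrations -/

/-- A weak fibration of scaled simplicial sets (RLP against scaled inner horns and the
two families of special scaled outer horns, the latter expressed via the condition that
the initial/final edge is sent to a degenerate edge, which encodes factoring through the
pushout `Λⁿ ∐_{Δ¹} Δ⁰ ⊆ Δⁿ ∐_{Δ¹} Δ⁰`). -/
structure WeakFib {E B : SScaled} (p : E ⟶ B) : Prop where
  inner : ∀ (n i : ℕ) (h2 : 2 ≤ n) (h0 : 0 < i) (hn : i < n)
    (u : SHorn n ⟨i, by omega⟩ (innerScale n i h0 hn) ⟶ E)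
    (v : SDelta n (innerScale n i h0 hn) ⟶ B),
    u ≫ p = sHornIncl n ⟨i, by omega⟩ (innerScale n i h0 hn) ≫ v →
    HasSLift (sHornIncl n ⟨i, by omega⟩ (innerScale n i h0 hn)) p u v
  outer0 : ∀ (n : ℕ) (h2 : 2 ≤ n)
    (u : SHorn n ⟨0, by omega⟩ (scale01n n (by omega)) ⟶ E)
    (v : SDelta n (scale01n n (by omega)) ⟶ B),
    u ≫ p = sHornIncl n ⟨0, by omega⟩ (scale01n n (by omega)) ≫ v →
    (∀ el : (Λ[n, (⟨0, by omega⟩ : Fin (n+1))] : SSet) _⦋1⦌, el.1 = e01 n (by omega) →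
      DegEdge E.carrier (u.toHom.app (op ⦋1⦌) el)) →
    DegEdge B.carrier (v.toHom.app (op ⦋1⦌) (e01 n (by omega))) →
    HasSLift (sHornIncl n ⟨0, by omega⟩ (scale01n n (by omega))) p u v
  outerN : ∀ (n : ℕ) (h2 : 2 ≤ n)
    (u : SHorn n ⟨n, by omega⟩ (scale0nn n (by omega)) ⟶ E)
    (v : SDelta n (scale0nn n (by omega)) ⟶ B),
    u ≫ p = sHornIncl n ⟨n, by omega⟩ (scale0nn n (by omega)) ≫ v →
    (∀ el : (Λ[n, (⟨n, by omega⟩ : Fin (n+1))] : SSet) _⦋1⦌, el.1 = eN n (by omega) →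
      DegEdge E.carrier (u.toHom.app (op ⦋1⦌) el)) →
    DegEdge B.carrier (v.toHom.app (op ⦋1⦌) (eN n (by omega))) →
    HasSLift (sHornIncl n ⟨n, by omega⟩ (scale0nn n (by omega))) p u v

/-! ### (Co)cartesian edges -/

/-- An edge `e` of `E` is `p`-cartesian when every scaled right outer horn
`(Λⁿₙ, {Δ^{0,n-1,n}})` whose final edge is `e` admits fillers relative to `p`. -/
def IsCartEdge {E B : SScaled} (p : E ⟶ B) (e : E.carrier _⦋1⦌) : Prop :=
  ∀ (n : ℕ) (h2 : 2 ≤ n)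
    (el : (Λ[n, (⟨n, by omega⟩ : Fin (n+1))] : SSet) _⦋1⦌) (_ : el.1 = eN n (by omega))
    (u : SHorn n ⟨n, by omega⟩ (scale0nn n (by omega)) ⟶ E)
    (v : SDelta n (scale0nn n (by omega)) ⟶ B),
    u ≫ p = sHornIncl n ⟨n, by omega⟩ (scale0nn n (by omega)) ≫ v →
    u.toHom.app (op ⦋1⦌) el = e →
    HasSLift (sHornIncl n ⟨n, by omega⟩ (scale0nn n (by omega))) p u v

/-- An edge `e` of `E` is `p`-cocartesian when every scaled left outer horn
`(Λⁿ₀, {Δ^{0,1,n}})` whose initial edge is `e` admits fillers relative to `p`. -/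
def IsCocartEdge {E B : SScaled} (p : E ⟶ B) (e : E.carrier _⦋1⦌) : Prop :=
  ∀ (n : ℕ) (h2 : 2 ≤ n)
    (el : (Λ[n, (⟨0, by omega⟩ : Fin (n+1))] : SSet) _⦋1⦌) (_ : el.1 = e01 n (by omega))
    (u : SHorn n ⟨0, by omega⟩ (scale01n n (by omega)) ⟶ E)
    (v : SDelta n (scale01n n (by omega)) ⟶ B),
    u ≫ p = sHornIncl n ⟨0, by omega⟩ (scale01n n (by omega)) ≫ v →
    u.toHom.app (op ⦋1⦌) el = e →
    HasSLift (sHornIncl n ⟨0, by omega⟩ (scale01n n (by omega))) p u v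
/-! ### Inner and outer triangles -/

/-- `σ` is a left `p`-inner triangle: lifting problems of `Λⁿ_{n-1} → E` against
`Δⁿ → B` whose restriction to `Δ^{n-2,n-1,n}` is `σ` admit diagonal fillers. -/
def LeftInnerTri {E B : SScaled} (p : E ⟶ B) (σ : E.carrier _⦋2⦌) : Prop :=
  ∀ (n : ℕ) (h2 : 2 ≤ n)
    (t : (Λ[n, (⟨n - 1, by omega⟩ : Fin (n+1))] : SSet) _⦋2⦌)
    (_ : t.1 = triN n (n - 2) (n - 1) n (by omega) (by omega) (by omega))
    (u : (Λ[n, (⟨n - 1, by omega⟩ : Fin (n+1))] : SSet) ⟶ E.carrier) (v : Δ[n] ⟶ B.carrier),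
    u ≫ p.toHom = (SSet.horn n ⟨n - 1, by omega⟩).ι ≫ v →
    u.app (op ⦋2⦌) t = σ →
    PlainLift ((SSet.horn n ⟨n - 1, by omega⟩).ι) p.toHom u v

/-- `σ` is a right `p`-inner triangle: lifting problems of `Λⁿ₁ → E` against
`Δⁿ → B` whose restriction to `Δ^{0,1,2}` is `σ` admit diagonal fillers. -/
def RightInnerTri {E B : SScaled} (p : E ⟶ B) (σ : E.carrier _⦋2⦌) : Prop :=
  ∀ (n : ℕ) (h2 : 2 ≤ n)
    (t : (Λ[n, (⟨1, by omega⟩ : Fin (n+1))] : SSet) _⦋2⦌)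
    (_ : t.1 = triN n 0 1 2 (by omega) (by omega) (by omega))
    (u : (Λ[n, (⟨1, by omega⟩ : Fin (n+1))] : SSet) ⟶ E.carrier) (v : Δ[n] ⟶ B.carrier),
    u ≫ p.toHom = (SSet.horn n ⟨1, by omega⟩).ι ≫ v →
    u.app (op ⦋2⦌) t = σ →
    PlainLift ((SSet.horn n ⟨1, by omega⟩).ι) p.toHom u v

/-- `σ` is a left `p`-outer triangle: lifting problems of `Λⁿ₀ → E` against
`Δⁿ → B` whose restriction to `Δ^{0,1,n}` is `σ` admit diagonal fillers. -/
def LeftOuterTri {E B : SScaled} (p : E ⟶ B) (σ : E.carrier _⦋2⦌) : Prop :=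
  ∀ (n : ℕ) (h2 : 2 ≤ n)
    (t : (Λ[n, (⟨0, by omega⟩ : Fin (n+1))] : SSet) _⦋2⦌)
    (_ : t.1 = triN n 0 1 n (by omega) (by omega) (by omega))
    (u : (Λ[n, (⟨0, by omega⟩ : Fin (n+1))] : SSet) ⟶ E.carrier) (v : Δ[n] ⟶ B.carrier),
    u ≫ p.toHom = (SSet.horn n ⟨0, by omega⟩).ι ≫ v →
    u.app (op ⦋2⦌) t = σ →
    PlainLift ((SSet.horn n ⟨0, by omega⟩).ι) p.toHom u v

/-- `σ` is a right `p`-outer triangle: lifting problems of `Λⁿₙ → E` against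
`Δⁿ → B` whose restriction to `Δ^{0,n-1,n}` is `σ` admit diagonal fillers. -/
def RightOuterTri {E B : SScaled} (p : E ⟶ B) (σ : E.carrier _⦋2⦌) : Prop :=
  ∀ (n : ℕ) (h2 : 2 ≤ n)
    (t : (Λ[n, (⟨n, by omega⟩ : Fin (n+1))] : SSet) _⦋2⦌)
    (_ : t.1 = triN n 0 (n - 1) n (by omega) (by omega) (by omega))
    (u : (Λ[n, (⟨n, by omega⟩ : Fin (n+1))] : SSet) ⟶ E.carrier) (v : Δ[n] ⟶ B.carrier),
    u ≫ p.toHom = (SSet.horn n ⟨n, by omega⟩).ι ≫ v →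
    u.app (op ⦋2⦌) t = σ →
    PlainLift ((SSet.horn n ⟨n, by omega⟩).ι) p.toHom u v

/-! ### Whiskering -/

/-- A 3-simplex `ρ` exhibits `σ'` as the left whiskering of `σ` (by its `Δ^{0,1}`-edge). -/
def ExhibitsLeftWhisk (E : SScaled) (ρ : E.carrier _⦋3⦌) (σ' σ : E.carrier _⦋2⦌) : Prop :=
  dFace E.carrier 1 ρ = σ' ∧ dFace E.carrier 0 ρ = σ ∧
    dFace E.carrier 3 ρ ∈ E.thin ∧ dFace E.carrier 2 ρ ∈ E.thin

/-- A 3-simplex `ρ` exhibits `σ'` as the right whiskering of `σ` (by its `Δ^{2,3}`-edge). -/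
def ExhibitsRightWhisk (E : SScaled) (ρ : E.carrier _⦋3⦌) (σ' σ : E.carrier _⦋2⦌) : Prop :=
  dFace E.carrier 2 ρ = σ' ∧ dFace E.carrier 3 ρ = σ ∧
    dFace E.carrier 1 ρ ∈ E.thin ∧ dFace E.carrier 0 ρ ∈ E.thin

/-! ### Lifts of triangles and 2-fibrations -/

/-- `p` has left inner lifts of triangles (the left inner 2-fibration condition). -/
def HasLeftInnerLifts {E B : SScaled} (p : E ⟶ B) : Prop :=
  ∀ (σ : B.carrier _⦋2⦌) (f g : E.carrier _⦋1⦌),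
    eTgt E.carrier f = eSrc E.carrier g →
    p.toHom.app (op ⦋1⦌) f = tFace B.carrier 2 σ →
    p.toHom.app (op ⦋1⦌) g = tFace B.carrier 0 σ →
    ∃ τ : E.carrier _⦋2⦌, LeftInnerTri p τ ∧ p.toHom.app (op ⦋2⦌) τ = σ ∧
      tFace E.carrier 2 τ = f ∧ tFace E.carrier 0 τ = g

/-- `p` has right inner lifts of triangles (the right inner 2-fibration condition). -/
def HasRightInnerLifts {E B : SScaled} (p : E ⟶ B) : Prop :=
  ∀ (σ : B.carrier _⦋2⦌) (f g : E.carrier _⦋1⦌),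
    eTgt E.carrier f = eSrc E.carrier g →
    p.toHom.app (op ⦋1⦌) f = tFace B.carrier 2 σ →
    p.toHom.app (op ⦋1⦌) g = tFace B.carrier 0 σ →
    ∃ τ : E.carrier _⦋2⦌, RightInnerTri p τ ∧ p.toHom.app (op ⦋2⦌) τ = σ ∧
      tFace E.carrier 2 τ = f ∧ tFace E.carrier 0 τ = g

/-- `p` has left outer lifts of triangles along `Λ²₀`-horns with `p`-cocartesian first edge. -/
def HasLeftOuterLifts {E B : SScaled} (p : E ⟶ B) : Prop :=
  ∀ (σ : B.carrier _⦋2⦌) (f h : E.carrier _⦋1⦌),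
    eSrc E.carrier f = eSrc E.carrier h →
    p.toHom.app (op ⦋1⦌) f = tFace B.carrier 2 σ →
    p.toHom.app (op ⦋1⦌) h = tFace B.carrier 1 σ →
    IsCocartEdge p f →
    ∃ τ : E.carrier _⦋2⦌, LeftOuterTri p τ ∧ p.toHom.app (op ⦋2⦌) τ = σ ∧
      tFace E.carrier 2 τ = f ∧ tFace E.carrier 1 τ = h

/-- `p` has right outer lifts of triangles along `Λ²₂`-horns with `p`-cartesian last edge. -/
def HasRightOuterLifts {E B : SScaled} (p : E ⟶ B) : Prop :=
  ∀ (σ : B.carrier _⦋2⦌) (g h : E.carrier _⦋1⦌),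
    eTgt E.carrier g = eTgt E.carrier h →
    p.toHom.app (op ⦋1⦌) g = tFace B.carrier 0 σ →
    p.toHom.app (op ⦋1⦌) h = tFace B.carrier 1 σ →
    IsCartEdge p g →
    ∃ τ : E.carrier _⦋2⦌, RightOuterTri p τ ∧ p.toHom.app (op ⦋2⦌) τ = σ ∧
      tFace E.carrier 0 τ = g ∧ tFace E.carrier 1 τ = h

/-- `p` has enough cartesian lifts of edges (with prescribed target). -/
def HasCartLifts {E B : SScaled} (p : E ⟶ B) : Prop :=
  ∀ (x : E.carrier _⦋0⦌) (h : B.carrier _⦋1⦌), eTgt B.carrier h = p.toHom.app (op ⦋0⦌) x →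
    ∃ e : E.carrier _⦋1⦌, IsCartEdge p e ∧ p.toHom.app (op ⦋1⦌) e = h ∧ eTgt E.carrier e = x

/-- `p` has enough cocartesian lifts of edges (with prescribed source). -/
def HasCocartLifts {E B : SScaled} (p : E ⟶ B) : Prop :=
  ∀ (x : E.carrier _⦋0⦌) (h : B.carrier _⦋1⦌), eSrc B.carrier h = p.toHom.app (op ⦋0⦌) x →
    ∃ e : E.carrier _⦋1⦌, IsCocartEdge p e ∧ p.toHom.app (op ⦋1⦌) e = h ∧ eSrc E.carrier e = x

/-- Left `p`-outer triangles are closed under right whiskering. -/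
def LeftOuterClosedRightWhisk {E B : SScaled} (p : E ⟶ B) : Prop :=
  ∀ (ρ : E.carrier _⦋3⦌) (σ' σ : E.carrier _⦋2⦌),
    ExhibitsRightWhisk E ρ σ' σ → LeftOuterTri p σ → LeftOuterTri p σ'

/-- Right `p`-outer triangles are closed under left whiskering. -/
def RightOuterClosedLeftWhisk {E B : SScaled} (p : E ⟶ B) : Prop :=
  ∀ (ρ : E.carrier _⦋3⦌) (σ' σ : E.carrier _⦋2⦌),
    ExhibitsLeftWhisk E ρ σ' σ → RightOuterTri p σ → RightOuterTri p σ'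

/-- An inner cartesian 2-fibration of scaled simplicial sets. -/
structure InnerCart2Fib {E B : SScaled} (p : E ⟶ B) : Prop where
  weak : WeakFib p
  left : HasLeftInnerLifts p
  right : HasRightInnerLifts p
  cart : HasCartLifts p

/-- An inner cocartesian 2-fibration of scaled simplicial sets
(the unfolding of "`pᵒᵖ` is an inner cartesian 2-fibration"). -/
structure InnerCocart2Fib {E B : SScaled} (p : E ⟶ B) : Prop where
  weak : WeakFib p
  left : HasLeftInnerLifts p
  right : HasRightInnerLifts p
  cocart : HasCocartLifts p

/-- An outer cartesian 2-fibration of scaled simplicial sets. -/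
structure OuterCart2Fib {E B : SScaled} (p : E ⟶ B) : Prop where
  weak : WeakFib p
  left : HasLeftOuterLifts p
  right : HasRightOuterLifts p
  whiskL : LeftOuterClosedRightWhisk p
  whiskR : RightOuterClosedLeftWhisk p
  cart : HasCartLifts p

/-- An outer cocartesian 2-fibration of scaled simplicial sets
(the unfolding of "`pᵒᵖ` is an outer cartesian 2-fibration"). -/
structure OuterCocart2Fib {E B : SScaled} (p : E ⟶ B) : Prop where
  weak : WeakFib p
  left : HasLeftOuterLifts p
  right : HasRightOuterLifts p
  whiskL : LeftOuterClosedRightWhisk p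
  whiskR : RightOuterClosedLeftWhisk p
  cocart : HasCocartLifts p

/-! ### Invertible edges -/

/-- An edge of a scaled simplicial set is invertible if it admits a two-sided inverse
up to thin triangles; for an ∞-bicategory this is equivalent to its image in the homotopy
category of the core ∞-category being an isomorphism. -/
def InvEdge (X : SScaled) (e : X.carrier _⦋1⦌) : Prop :=
  ∃ e' : X.carrier _⦋1⦌,
    (∃ σ ∈ X.thin, tFace X.carrier 2 σ = e ∧ tFace X.carrier 0 σ = e' ∧
      tFace X.carrier 1 σ = degAt X.carrier (eSrc X.carrier e)) ∧
    (∃ τ ∈ X.thin, tFace X.carrier 2 τ = e' ∧ tFace X.carrier 0 τ = e ∧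
      tFace X.carrier 1 τ = degAt X.carrier (eTgt X.carrier e))


/-! ### ∞-bicategories and the bicategorical model structure -/

/-- The scaling of `Δ⁴` appearing in the generating scaled anodyne maps. -/
def T4 : Set (Δ[4] _⦋2⦌) :=
  {triN 4 0 2 4 (by omega) (by omega) (by omega), triN 4 1 2 3 (by omega) (by omega) (by omega),
   triN 4 0 1 3 (by omega) (by omega) (by omega), triN 4 1 3 4 (by omega) (by omega) (by omega),
   triN 4 0 1 2 (by omega) (by omega) (by omega)}

/-- An ∞-bicategory: a scaled simplicial set admitting extensions along all
generating scaled anodyne maps. -/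
structure InfBicat (C : SScaled) : Prop where
  fillInner : ∀ (n i : ℕ) (h2 : 2 ≤ n) (h0 : 0 < i) (hn : i < n)
    (u : SHorn n ⟨i, by omega⟩ (innerScale n i h0 hn) ⟶ C),
    ∃ w : SDelta n (innerScale n i h0 hn) ⟶ C,
      sHornIncl n ⟨i, by omega⟩ (innerScale n i h0 hn) ≫ w = u
  saturation : ∀ u : SDelta 4 T4 ⟶ C,
    u.toHom.app (op ⦋2⦌) (triN 4 0 3 4 (by omega) (by omega) (by omega)) ∈ C.thin ∧
    u.toHom.app (op ⦋2⦌) (triN 4 0 1 4 (by omega) (by omega) (by omega)) ∈ C.thin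
  fillOuter : ∀ (n : ℕ) (h3 : 3 ≤ n)
    (u : SHorn n ⟨0, by omega⟩ (scale01n n (by omega)) ⟶ C),
    (∀ el : (Λ[n, (⟨0, by omega⟩ : Fin (n+1))] : SSet) _⦋1⦌, el.1 = e01 n (by omega) →
      DegEdge C.carrier (u.toHom.app (op ⦋1⦌) el)) →
    ∃ w : SDelta n (scale01n n (by omega)) ⟶ C,
      sHornIncl n ⟨0, by omega⟩ (scale01n n (by omega)) ≫ w = u

/-- The walking coherent isomorphism `J` (nerve of the chaotic groupoid on two objects). -/
def Jset : SSet.{0} where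
  obj m := Fin (m.unop.len + 1) → Bool
  map f := TypeCat.ofHom (fun g => g ∘ f.unop.toOrderHom)

/-- `J` with all triangles thin. -/
def SJ : SScaled := ⟨Jset, Set.univ, fun _ _ => trivial⟩

/-- A vertex of `J`. -/
def Jvert (b : Bool) : Jset _⦋0⦌ := fun _ => b

/-- A fibration in the bicategorical model structure (between fibrant objects):
right lifting property against the generating scaled anodyne maps and
against the endpoint inclusion `{1} ↪ J♯`. -/
structure BicatFib {E B : SScaled} (p : E ⟶ B) : Prop where
  inner : ∀ (n i : ℕ) (h2 : 2 ≤ n) (h0 : 0 < i) (hn : i < n)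
    (u : SHorn n ⟨i, by omega⟩ (innerScale n i h0 hn) ⟶ E)
    (v : SDelta n (innerScale n i h0 hn) ⟶ B),
    u ≫ p = sHornIncl n ⟨i, by omega⟩ (innerScale n i h0 hn) ≫ v →
    HasSLift (sHornIncl n ⟨i, by omega⟩ (innerScale n i h0 hn)) p u v
  saturation : ∀ u : SDelta 4 T4 ⟶ E,
    (p.toHom.app (op ⦋2⦌) (u.toHom.app (op ⦋2⦌)
        (triN 4 0 3 4 (by omega) (by omega) (by omega))) ∈ B.thin ∧
     p.toHom.app (op ⦋2⦌) (u.toHom.app (op ⦋2⦌)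
        (triN 4 0 1 4 (by omega) (by omega) (by omega))) ∈ B.thin) →
    (u.toHom.app (op ⦋2⦌) (triN 4 0 3 4 (by omega) (by omega) (by omega)) ∈ E.thin ∧
     u.toHom.app (op ⦋2⦌) (triN 4 0 1 4 (by omega) (by omega) (by omega)) ∈ E.thin)
  outer : ∀ (n : ℕ) (h3 : 3 ≤ n)
    (u : SHorn n ⟨0, by omega⟩ (scale01n n (by omega)) ⟶ E)
    (v : SDelta n (scale01n n (by omega)) ⟶ B),
    u ≫ p = sHornIncl n ⟨0, by omega⟩ (scale01n n (by omega)) ≫ v →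
    (∀ el : (Λ[n, (⟨0, by omega⟩ : Fin (n+1))] : SSet) _⦋1⦌, el.1 = e01 n (by omega) →
      DegEdge E.carrier (u.toHom.app (op ⦋1⦌) el)) →
    DegEdge B.carrier (v.toHom.app (op ⦋1⦌) (e01 n (by omega))) →
    HasSLift (sHornIncl n ⟨0, by omega⟩ (scale01n n (by omega))) p u v
  jlift : ∀ (v : SJ ⟶ B) (x : E.carrier _⦋0⦌),
    p.toHom.app (op ⦋0⦌) x = v.toHom.app (op ⦋0⦌) (Jvert true) →
    ∃ w : SJ ⟶ E, w ≫ p = v ∧ w.toHom.app (op ⦋0⦌) (Jvert true) = x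

/-! ### Bicategorical equivalences -/

/-- The cylinder `X × J♯` on a scaled simplicial set. -/
def cylJ (X : SScaled) : SScaled where
  carrier :=
    { obj := fun m => X.carrier.obj m × (Fin (m.unop.len + 1) → Bool)
      map := fun f => TypeCat.ofHom (fun ab => (X.carrier.map f ab.1, ab.2 ∘ f.unop.toOrderHom))
      map_id := by intro m; ext ab <;> first | rfl | simp
      map_comp := by intro a b c f g; ext ab <;> first | rfl | simp }
  thin := {σ | σ.1 ∈ X.thin}
  deg_thin := by
    rintro σ ⟨e, h | h⟩
    · exact X.deg_thin _ ⟨e.1, Or.inl (congrArg Prod.fst h)⟩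
    · exact X.deg_thin _ ⟨e.1, Or.inr (congrArg Prod.fst h)⟩

/-- The endpoint inclusions `X → X × J♯`. -/
def cylI (X : SScaled) (b : Bool) : X ⟶ cylJ X :=
  ⟨{ app := fun m => TypeCat.ofHom (fun a => (a, fun _ => b)), naturality := by intros; rfl }, fun σ h => h⟩

/-- `J`-homotopy of maps of scaled simplicial sets. -/
def SHomotopic {X Y : SScaled} (f g : X ⟶ Y) : Prop :=
  ∃ H : cylJ X ⟶ Y, cylI X false ≫ H = f ∧ cylI X true ≫ H = g

/-- A bicategorical equivalence (between ∞-bicategories): a `J`-homotopy equivalence. -/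
def BicatEquiv {X Y : SScaled} (f : X ⟶ Y) : Prop :=
  ∃ g : Y ⟶ X, SHomotopic (f ≫ g) (𝟙 X) ∧ SHomotopic (g ≫ f) (𝟙 Y)

/-! ### The core of a scaled simplicial set -/

/-- The core `X^thi`: the maximal simplicial subset of `X` all of whose triangles
are thin. -/
def core (X : SScaled) : SSet.{0} where
  obj m := {a : X.carrier.obj m //
    ∀ f : (⦋2⦌ : SimplexCategory) ⟶ m.unop, X.carrier.map f.op a ∈ X.thin}
  map g := TypeCat.ofHom fun a => ⟨X.carrier.map g a.1, fun f => by
    rw [← FunctorToTypes.map_comp_apply]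
    exact a.2 (f ≫ g.unop)⟩
  map_id := by intro m; ext a; simp
  map_comp := by intro a b c f g; ext x; simp

/-- The map induced on cores by a map of scaled simplicial sets. -/
def coreMap {E B : SScaled} (p : E ⟶ B) : core E ⟶ core B where
  app m := TypeCat.ofHom fun a => ⟨p.toHom.app m a.1, fun f => by
    have h := FunctorToTypes.naturality p.toHom f.op a.1
    rw [← h]
    exact p.thin_of _ (a.2 f)⟩
  naturality := by
    intro m m' g; ext a
    apply Subtype.ext
    exact FunctorToTypes.naturality p.toHom g a.1

/-! ### Fibrations of simplicial sets (quasi-categorical notions) -/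

/-- An inner fibration of simplicial sets. -/
def InnerFibSS {X Y : SSet.{0}} (p : X ⟶ Y) : Prop :=
  ∀ (n i : ℕ) (h0 : 0 < i) (hn : i < n),
    HasLiftingProperty ((SSet.horn n ⟨i, by omega⟩).ι) p

/-- A `p`-cartesian edge for a map of simplicial sets. -/
def IsCartEdgeSS {X Y : SSet.{0}} (p : X ⟶ Y) (e : X _⦋1⦌) : Prop :=
  ∀ (n : ℕ) (h2 : 2 ≤ n)
    (el : (Λ[n, (⟨n, by omega⟩ : Fin (n+1))] : SSet) _⦋1⦌) (_ : el.1 = eN n (by omega))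
    (u : (Λ[n, (⟨n, by omega⟩ : Fin (n+1))] : SSet) ⟶ X) (v : Δ[n] ⟶ Y),
    u ≫ p = (SSet.horn n ⟨n, by omega⟩).ι ≫ v →
    u.app (op ⦋1⦌) el = e →
    PlainLift ((SSet.horn n ⟨n, by omega⟩).ι) p u v

/-- A `p`-cocartesian edge for a map of simplicial sets. -/
def IsCocartEdgeSS {X Y : SSet.{0}} (p : X ⟶ Y) (e : X _⦋1⦌) : Prop :=
  ∀ (n : ℕ) (h2 : 2 ≤ n)
    (el : (Λ[n, (⟨0, by omega⟩ : Fin (n+1))] : SSet) _⦋1⦌) (_ : el.1 = e01 n (by omega))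
    (u : (Λ[n, (⟨0, by omega⟩ : Fin (n+1))] : SSet) ⟶ X) (v : Δ[n] ⟶ Y),
    u ≫ p = (SSet.horn n ⟨0, by omega⟩).ι ≫ v →
    u.app (op ⦋1⦌) el = e →
    PlainLift ((SSet.horn n ⟨0, by omega⟩).ι) p u v

/-- A cartesian fibration of simplicial sets. -/
def CartFibSS {X Y : SSet.{0}} (p : X ⟶ Y) : Prop :=
  InnerFibSS p ∧ ∀ (x : X _⦋0⦌) (h : Y _⦋1⦌), eTgt Y h = p.app (op ⦋0⦌) x →
    ∃ e : X _⦋1⦌, IsCartEdgeSS p e ∧ p.app (op ⦋1⦌) e = h ∧ eTgt X e = x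

/-- A cocartesian fibration of simplicial sets. -/
def CocartFibSS {X Y : SSet.{0}} (p : X ⟶ Y) : Prop :=
  InnerFibSS p ∧ ∀ (x : X _⦋0⦌) (h : Y _⦋1⦌), eSrc Y h = p.app (op ⦋0⦌) x →
    ∃ e : X _⦋1⦌, IsCocartEdgeSS p e ∧ p.app (op ⦋1⦌) e = h ∧ eSrc X e = x

/-- A trivial fibration of simplicial sets. -/
def TrivFibSS {X Y : SSet.{0}} (p : X ⟶ Y) : Prop :=
  ∀ n : ℕ, HasLiftingProperty ((SSet.boundary n).ι) p

/-! ### Constant simplices and fibres -/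

/-- The unique map to `⦋0⦌`. -/
def toPt (m : SimplexCategoryᵒᵖ) : m.unop ⟶ ⦋0⦌ :=
  SimplexCategory.Hom.mk (OrderHom.const _ 0)

/-- The constant `m`-simplex at a vertex. -/
def constSx (X : SSet.{0}) (x : X _⦋0⦌) (m : SimplexCategoryᵒᵖ) : X.obj m :=
  X.map (toPt m).op x

theorem toPt_comp {m m' : SimplexCategoryᵒᵖ} (g : m ⟶ m') : g.unop ≫ toPt m = toPt m' := by
  apply SimplexCategory.Hom.ext
  apply OrderHom.ext
  funext i
  exact @Subsingleton.elim (Fin 1) _ _ _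

theorem constSx_natural (X : SSet.{0}) (x : X _⦋0⦌) {m m' : SimplexCategoryᵒᵖ} (g : m ⟶ m') :
    X.map g (constSx X x m) = constSx X x m' := by
  unfold constSx
  rw [← FunctorToTypes.map_comp_apply]
  have : (toPt m).op ≫ g = (toPt m').op := congrArg Quiver.Hom.op (toPt_comp g)
  rw [this]

/-- The fibre of a map of scaled simplicial sets over a vertex of the base. -/
def sFibre {E B : SScaled} (p : E ⟶ B) (b : B.carrier _⦋0⦌) : SScaled where
  carrier :=
    { obj := fun m => {a : E.carrier.obj m // p.toHom.app m a = constSx B.carrier b m}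
      map := fun g => TypeCat.ofHom fun a => ⟨E.carrier.map g a.1, by
        have h := FunctorToTypes.naturality p.toHom g a.1
        rw [h, a.2, constSx_natural]⟩
      map_id := by intro m; ext a; simp
      map_comp := by intros; ext a; simp }
  thin := {σ | σ.1 ∈ E.thin}
  deg_thin := by
    rintro σ ⟨e, h | h⟩
    · exact E.deg_thin _ ⟨e.1, Or.inl (congrArg Subtype.val h)⟩
    · exact E.deg_thin _ ⟨e.1, Or.inr (congrArg Subtype.val h)⟩

/-- The map induced on fibres by a commutative square. -/
def sFibreMap {E E' B B' : SScaled} (p : E ⟶ B) (q : E' ⟶ B') (r : E ⟶ E') (f : B ⟶ B')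
    (sq : r ≫ q = p ≫ f) (b : B.carrier _⦋0⦌) :
    sFibre p b ⟶ sFibre q (f.toHom.app (op ⦋0⦌) b) where
  toHom :=
    { app := fun m => TypeCat.ofHom fun a => ⟨r.toHom.app m a.1, by
        have h1 : q.toHom.app m (r.toHom.app m a.1) = f.toHom.app m (p.toHom.app m a.1) := by
          have := congrArg SHom.toHom sq
          exact congrArg (fun (t : E.carrier ⟶ B'.carrier) => t.app m a.1) this
        rw [h1, a.2]
        unfold constSx
        exact FunctorToTypes.naturality f.toHom (toPt m).op b⟩
      naturality := by
        intro m m' g; ext a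
        apply Subtype.ext
        exact FunctorToTypes.naturality r.toHom g a.1 }
  thin_of := fun σ h => r.thin_of _ h


/-! ### Products of (scaled) simplicial sets -/

/-- Product of simplicial sets (defined levelwise). -/
def prodC (X Y : SSet.{0}) : SSet.{0} where
  obj m := X.obj m × Y.obj m
  map f := TypeCat.ofHom fun ab => (X.map f ab.1, Y.map f ab.2)
  map_id := by intro m; ext ab <;> simp
  map_comp := by intros; ext ab <;> simp

/-- Product of scaled simplicial sets: thin triangles are the pairs of thin triangles. -/
def sProd (X Y : SScaled) : SScaled where
  carrier := prodC X.carrier Y.carrier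
  thin := {σ | σ.1 ∈ X.thin ∧ σ.2 ∈ Y.thin}
  deg_thin := by
    rintro σ ⟨e, h | h⟩
    · exact ⟨X.deg_thin _ ⟨e.1, Or.inl (congrArg Prod.fst h)⟩,
        Y.deg_thin _ ⟨e.2, Or.inl (congrArg Prod.snd h)⟩⟩
    · exact ⟨X.deg_thin _ ⟨e.1, Or.inr (congrArg Prod.fst h)⟩,
        Y.deg_thin _ ⟨e.2, Or.inr (congrArg Prod.snd h)⟩⟩

/-! ### Inner/outer (co)cartesian 1-fibrations -/

/-- `p` detects thin triangles. -/
def DetectsThin {E B : SScaled} (p : E ⟶ B) : Prop :=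
  ∀ σ : E.carrier _⦋2⦌, p.toHom.app (op ⦋2⦌) σ ∈ B.thin → σ ∈ E.thin

/-- An inner fibration of scaled simplicial sets. -/
def InnerFib1 {E B : SScaled} (p : E ⟶ B) : Prop :=
  WeakFib p ∧ DetectsThin p ∧ InnerFibSS p.toHom

/-- An outer fibration of scaled simplicial sets: a weak fibration detecting thin
triangles whose underlying map has the RLP against the (unscaled) outer pushout-horns. -/
def OuterFib1 {E B : SScaled} (p : E ⟶ B) : Prop :=
  WeakFib p ∧ DetectsThin p ∧
  (∀ (n : ℕ) (h2 : 2 ≤ n) (u : (Λ[n, (⟨0, by omega⟩ : Fin (n+1))] : SSet) ⟶ E.carrier)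
      (v : Δ[n] ⟶ B.carrier), u ≫ p.toHom = (SSet.horn n ⟨0, by omega⟩).ι ≫ v →
      (∀ el : (Λ[n, (⟨0, by omega⟩ : Fin (n+1))] : SSet) _⦋1⦌, el.1 = e01 n (by omega) →
        DegEdge E.carrier (u.app (op ⦋1⦌) el)) →
      DegEdge B.carrier (v.app (op ⦋1⦌) (e01 n (by omega))) →
      PlainLift ((SSet.horn n ⟨0, by omega⟩).ι) p.toHom u v) ∧
  (∀ (n : ℕ) (h2 : 2 ≤ n) (u : (Λ[n, (⟨n, by omega⟩ : Fin (n+1))] : SSet) ⟶ E.carrier)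
      (v : Δ[n] ⟶ B.carrier), u ≫ p.toHom = (SSet.horn n ⟨n, by omega⟩).ι ≫ v →
      (∀ el : (Λ[n, (⟨n, by omega⟩ : Fin (n+1))] : SSet) _⦋1⦌, el.1 = eN n (by omega) →
        DegEdge E.carrier (u.app (op ⦋1⦌) el)) →
      DegEdge B.carrier (v.app (op ⦋1⦌) (eN n (by omega))) →
      PlainLift ((SSet.horn n ⟨n, by omega⟩).ι) p.toHom u v)

def InnerCart1Fib {E B : SScaled} (p : E ⟶ B) : Prop := InnerFib1 p ∧ HasCartLifts p
def InnerCocart1Fib {E B : SScaled} (p : E ⟶ B) : Prop := InnerFib1 p ∧ HasCocartLifts p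
def OuterCart1Fib {E B : SScaled} (p : E ⟶ B) : Prop := OuterFib1 p ∧ HasCartLifts p
def OuterCocart1Fib {E B : SScaled} (p : E ⟶ B) : Prop := OuterFib1 p ∧ HasCocartLifts p


/-! ### Slice mapping ∞-categories `Map^▷ = Hom^▷` -/

/-- Join of a monotone map with the identity on a final point. -/
def joinFun {m n : ℕ} (f : Fin (m + 1) →o Fin (n + 1)) : Fin (m + 2) →o Fin (n + 2) where
  toFun i := if h : i.val < m + 1 then (f ⟨i.val, h⟩).castSucc else Fin.last (n + 1)
  monotone' := by
    intro a b hab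
    dsimp only
    by_cases h1 : a.val < m + 1 <;> by_cases h2 : b.val < m + 1
    · rw [dif_pos h1, dif_pos h2]
      exact Fin.castSucc_le_castSucc_iff.mpr (f.monotone
        (show a.val ≤ b.val from hab))
    · rw [dif_pos h1, dif_neg h2]
      exact Fin.le_last _
    · exact absurd (show a.val ≤ b.val from hab) (by omega)
    · rw [dif_neg h1, dif_neg h2]

theorem joinFun_apply_lt {m n : ℕ} (f : Fin (m + 1) →o Fin (n + 1)) (i : Fin (m + 2))
    (h : i.val < m + 1) : joinFun f i = (f ⟨i.val, h⟩).castSucc := dif_pos h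

theorem joinFun_apply_last {m n : ℕ} (f : Fin (m + 1) →o Fin (n + 1)) (i : Fin (m + 2))
    (h : ¬ i.val < m + 1) : joinFun f i = Fin.last (n + 1) := dif_neg h

/-- The inclusion of the final vertex `⦋0⦌ → [k+1]`. -/
def lastH (k : ℕ) : (⦋0⦌ : SimplexCategory) ⟶ ⦋k + 1⦌ :=
  SimplexCategory.Hom.mk (OrderHom.const _ (Fin.last (k + 1)))

/-- The inclusion of the front face `a → ⦋a.len + 1⦌`. -/
def frontH (a : SimplexCategory) : a ⟶ ⦋a.len + 1⦌ :=
  SimplexCategory.Hom.mk ⟨Fin.castSucc, fun _ _ h => Fin.castSucc_le_castSucc_iff.mpr h⟩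

/-- The join of a morphism of `SimplexCategory` with the identity on a final point. -/
def joinH {a b : SimplexCategory} (f : a ⟶ b) : (⦋a.len + 1⦌ : SimplexCategory) ⟶ ⦋b.len + 1⦌ :=
  SimplexCategory.Hom.mk (joinFun f.toOrderHom)

theorem joinH_id (a : SimplexCategory) : joinH (𝟙 a) = 𝟙 (⦋a.len + 1⦌ : SimplexCategory) := by
  apply SimplexCategory.Hom.ext
  apply OrderHom.ext
  funext i
  show joinFun _ i = i
  by_cases h : i.val < a.len + 1
  · rw [joinFun_apply_lt _ _ h]
    exact Fin.ext rfl
  · rw [joinFun_apply_last _ _ h]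
    exact Fin.ext (by have := i.isLt; simp only [SimplexCategory.len_mk] at *; simp [Fin.last]; omega)

theorem joinH_comp {a b c : SimplexCategory} (f : a ⟶ b) (g : b ⟶ c) :
    joinH (f ≫ g) = joinH f ≫ joinH g := by
  apply SimplexCategory.Hom.ext
  apply OrderHom.ext
  funext i
  show joinFun _ i = joinFun g.toOrderHom (joinFun f.toOrderHom i)
  by_cases h : i.val < a.len + 1
  · rw [joinFun_apply_lt _ _ h, joinFun_apply_lt _ _ h,
      joinFun_apply_lt g.toOrderHom _ (by exact (f.toOrderHom ⟨i.val, h⟩).isLt)]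
    exact congrArg Fin.castSucc (congrArg g.toOrderHom (Fin.ext rfl))
  · rw [joinFun_apply_last _ _ h, joinFun_apply_last _ _ h,
      joinFun_apply_last g.toOrderHom _ (by simp [Fin.last])]

theorem lastH_joinH {a b : SimplexCategory} (f : a ⟶ b) :
    lastH a.len ≫ joinH f = lastH b.len := by
  apply SimplexCategory.Hom.ext
  apply OrderHom.ext
  funext i
  show joinFun f.toOrderHom (Fin.last (a.len + 1)) = Fin.last (b.len + 1)
  rw [joinFun_apply_last _ _ (by simp [Fin.last])]

theorem frontH_joinH {a b : SimplexCategory} (f : a ⟶ b) :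
    frontH a ≫ joinH f = f ≫ frontH b := by
  apply SimplexCategory.Hom.ext
  apply OrderHom.ext
  funext i
  show joinFun f.toOrderHom (Fin.castSucc i) = Fin.castSucc (f.toOrderHom i)
  rw [joinFun_apply_lt _ _ (by exact i.isLt)]
  exact congrArg Fin.castSucc (congrArg f.toOrderHom (Fin.ext rfl))

/-- The slice mapping space `Hom^▷_C(x,z) = C_{/z} ×_C {x}`: its `u`-simplices are the
`(u+1)`-simplices of `C` whose final vertex is `z` and whose front face is constant
at `x`. -/
def HomR (C : SSet.{0}) (x z : C _⦋0⦌) : SSet.{0} where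
  obj u := {τ : C.obj (op ⦋u.unop.len + 1⦌) //
    C.map (lastH u.unop.len).op τ = z ∧
    C.map (frontH u.unop).op τ = constSx C x (op u.unop)}
  map {u u'} g := TypeCat.ofHom fun τ => ⟨C.map (joinH g.unop).op τ.1, by
      constructor
      · rw [← FunctorToTypes.map_comp_apply, ← op_comp, lastH_joinH]
        exact τ.2.1
      · rw [← FunctorToTypes.map_comp_apply, ← op_comp, frontH_joinH, op_comp,
          FunctorToTypes.map_comp_apply, τ.2.2]
        exact constSx_natural C x ((Quiver.Hom.op g.unop) : op u.unop ⟶ op u'.unop)⟩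
  map_id u := by
    ext τ
    show C.map (joinH (𝟙 u.unop)).op τ.1 = τ.1
    rw [joinH_id, op_id, FunctorToTypes.map_id_apply]
  map_comp {u u' u''} g h := by
    ext τ
    show C.map (joinH ((g ≫ h).unop)).op τ.1 = C.map (joinH h.unop).op (C.map (joinH g.unop).op τ.1)
    rw [← FunctorToTypes.map_comp_apply, ← op_comp]
    rw [show (g ≫ h).unop = h.unop ≫ g.unop from rfl, joinH_comp]

/-- The map induced on slice mapping spaces by a map of simplicial sets. -/
def homRMap {C D : SSet.{0}} (f : C ⟶ D) (x z : C _⦋0⦌) :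
    HomR C x z ⟶ HomR D (f.app (op ⦋0⦌) x) (f.app (op ⦋0⦌) z) where
  app u := TypeCat.ofHom fun τ => ⟨f.app (op ⦋u.unop.len + 1⦌) τ.1, by
    constructor
    · rw [← FunctorToTypes.naturality, τ.2.1]
    · rw [← FunctorToTypes.naturality, τ.2.2]
      unfold constSx
      rw [← FunctorToTypes.naturality]⟩
  naturality u u' g := by
    ext τ
    apply Subtype.ext
    exact FunctorToTypes.naturality f (joinH g.unop).op τ.1

/-- The fibre of a map of simplicial sets over a vertex of the target. -/
def ssFibre {X Y : SSet.{0}} (p : X ⟶ Y) (y : Y _⦋0⦌) : SSet.{0} where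
  obj m := {a : X.obj m // p.app m a = constSx Y y m}
  map g := TypeCat.ofHom fun a => ⟨X.map g a.1, by
    have h := FunctorToTypes.naturality p g a.1
    rw [h, a.2, constSx_natural]⟩
  map_id := by intro m; ext a; simp
  map_comp := by intros; ext a; simp

/-- The identity simplex of `Δ[N]`. -/
def stdId (N : ℕ) : Δ[N] _⦋N⦌ := SSet.stdSimplex.objEquiv.symm (𝟙 _)




/-! basic facts -/

theorem toPt_op0 : toPt (op ⦋0⦌) = 𝟙 (⦋0⦌ : SimplexCategory) := by
  apply SimplexCategory.Hom.ext; apply OrderHom.ext; funext j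
  exact @Subsingleton.elim (Fin 1) _ _ _

theorem constSx_op0 (X : SSet.{0}) (w : X _⦋0⦌) : constSx X w (op ⦋0⦌) = w := by
  unfold constSx
  rw [toPt_op0, op_id, FunctorToTypes.map_id_apply]

theorem constSx_map {X Y : SSet.{0}} (f : X ⟶ Y) (w : X _⦋0⦌) (m : SimplexCategoryᵒᵖ) :
    f.app m (constSx X w m) = constSx Y (f.app (op ⦋0⦌) w) m := by
  unfold constSx
  rw [← FunctorToTypes.naturality]

theorem degAt_eq_constSx (X : SSet.{0}) (w : X _⦋0⦌) :
    degAt X w = constSx X w (op ⦋1⦌) := by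
  unfold degAt constSx
  have : (SimplexCategory.σ (0 : Fin 1)) = toPt (op ⦋1⦌) := by
    apply SimplexCategory.Hom.ext; apply OrderHom.ext; funext j
    exact @Subsingleton.elim (Fin 1) _ _ _
  rw [this]

theorem constSx_deg (X : SSet.{0}) (w : X _⦋0⦌) : DegTri X (constSx X w (op ⦋2⦌)) := by
  refine ⟨constSx X w (op ⦋1⦌), Or.inl ?_⟩
  rw [constSx_natural]

/-- Pointwise formula for a map out of a standard simplex. -/
theorem yoneda_pointwise {N : ℕ} {W : SSet.{0}} (w : Δ[N] ⟶ W) (m : SimplexCategoryᵒᵖ)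
    (b : Δ[N].obj m) :
    w.app m b = W.map b.down.op (w.app (op ⦋N⦌) (stdId N)) := by
  have h := FunctorToTypes.naturality w b.down.op (stdId N)
  have h2 : Δ[N].map b.down.op (stdId N) = b := by
    refine ULift.down_injective ?_
    show b.down ≫ 𝟙 _ = b.down
    simp
  rw [h2] at h
  exact h

/-- The map `Δ[N] ⟶ D` defined by an `N`-simplex of `D`. -/
def simplexMap {N : ℕ} {D : SSet.{0}} (τ : D.obj (op ⦋N⦌)) : Δ[N] ⟶ D where
  app m := TypeCat.ofHom fun α => D.map α.down.op τ
  naturality m m' g := by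
    ext α
    show D.map (g.unop ≫ α.down).op τ = D.map g (D.map α.down.op τ)
    rw [op_comp, Quiver.Hom.op_unop, FunctorToTypes.map_comp_apply]

@[simp] theorem simplexMap_id {N : ℕ} {D : SSet.{0}} (τ : D.obj (op ⦋N⦌)) :
    (simplexMap τ).app (op ⦋N⦌) (stdId N) = τ := by
  show D.map _ τ = τ
  rw [show (stdId N).down = 𝟙 _ from rfl, op_id, FunctorToTypes.map_id_apply]

/-! ### the splitting index -/

theorem kOf_ex {n μ : ℕ} (a : Fin (μ+1) →o Fin (n+2)) :
    ∃ k, ∀ j : Fin (μ+1), k ≤ j.val → a j = Fin.last (n+1) :=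
  ⟨μ+1, fun j h => absurd j.isLt (by omega)⟩

/-- The first index at which a map `[μ] → ⦋n+1⦌` takes the value `n+1`. -/
noncomputable def kOf {n μ : ℕ} (a : Fin (μ+1) →o Fin (n+2)) : ℕ :=
  Nat.find (kOf_ex a)

theorem kOf_le {n μ : ℕ} (a : Fin (μ+1) →o Fin (n+2)) : kOf a ≤ μ + 1 :=
  Nat.find_le (fun j h => absurd j.isLt (by omega))

theorem kOf_spec {n μ : ℕ} (a : Fin (μ+1) →o Fin (n+2)) (j : Fin (μ+1))
    (h : kOf a ≤ j.val) : a j = Fin.last (n+1) :=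
  Nat.find_spec (kOf_ex a) j h

theorem lt_kOf_iff {n μ : ℕ} (a : Fin (μ+1) →o Fin (n+2)) (j : Fin (μ+1)) :
    j.val < kOf a ↔ (a j).val ≤ n := by
  constructor
  · intro hj
    by_contra hcon
    have hlast : a j = Fin.last (n+1) := by
      apply Fin.ext
      have := (a j).isLt
      show (a j).val = n + 1
      omega
    have : kOf a ≤ j.val := by
      apply Nat.find_le
      intro j' hj'
      have : a j ≤ a j' := a.monotone (by exact hj')
      rw [hlast] at this
      exact le_antisymm (Fin.le_last _) this
    omega
  · intro hj
    by_contra hcon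
    have := kOf_spec a j (by omega)
    rw [this] at hj
    simp [Fin.last] at hj

theorem kOf_eq {n μ : ℕ} (a : Fin (μ+1) →o Fin (n+2)) (k : ℕ) (hk : k ≤ μ + 1)
    (h1 : ∀ j : Fin (μ+1), j.val < k → (a j).val ≤ n)
    (h2 : ∀ j : Fin (μ+1), k ≤ j.val → a j = Fin.last (n+1)) : kOf a = k := by
  refine le_antisymm (Nat.find_le h2) ?_
  by_contra hcon
  push_neg at hcon
  have hk' : kOf a ≤ μ := by omega
  have hj := kOf_spec a ⟨kOf a, by omega⟩ (le_refl _)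
  have := h1 ⟨kOf a, by omega⟩ hcon
  rw [hj] at this
  simp [Fin.last] at this

/-! ### the truncation map and the front restriction -/

/-- The order hom `Fin (μ+1) → Fin (k-1+2)` collapsing everything above `k-1`. -/
def trHom (μ k : ℕ) (h0 : 0 < k) (hμ : k ≤ μ + 1) : Fin (μ+1) →o Fin (k-1+1+1) :=
  ⟨fun j => if h : j.val < k then ⟨j.val, by omega⟩ else ⟨k-1+1, by omega⟩,
    by
      intro a b hab
      dsimp only
      by_cases h1 : a.val < k <;> by_cases h2 : b.val < k
      · rw [dif_pos h1, dif_pos h2]; exact Fin.mk_le_mk.mpr hab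
      · rw [dif_pos h1, dif_neg h2]; exact Fin.mk_le_mk.mpr (by omega)
      · exact absurd (show a.val ≤ b.val from hab) (by omega)
      · rw [dif_neg h1, dif_neg h2]⟩

/-- The monotone surjection `[μ] → ⦋k-1+1⦌` collapsing everything above `k-1`. -/
def tr (μ k : ℕ) (h0 : 0 < k) (hμ : k ≤ μ + 1) : (⦋μ⦌ : SimplexCategory) ⟶ ⦋k-1+1⦌ :=
  SimplexCategory.Hom.mk (trHom μ k h0 hμ)

/-- The front restriction of a map `[μ] → ⦋n+1⦌` (before it reaches `n+1`). -/
def fr {n μ : ℕ} (a : Fin (μ+1) →o Fin (n+2)) (k : ℕ) (h0 : 0 < k) (hμ : k ≤ μ + 1)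
    (h1 : ∀ j : Fin (μ+1), j.val < k → (a j).val ≤ n) :
    Fin (k-1+1) →o Fin (n+1) :=
  ⟨fun j => ⟨(a ⟨j.val, by have := j.isLt; omega⟩).val,
      Nat.lt_succ_of_le (h1 _ (by have := j.isLt; show j.val < k; omega))⟩,
    fun j j' hjj => by
      dsimp only
      exact a.monotone (Fin.mk_le_mk.mpr hjj)⟩

theorem trHom_lt {μ k : ℕ} (h0 : 0 < k) (hμ : k ≤ μ + 1) (j : Fin (μ+1)) (h : j.val < k) :
    trHom μ k h0 hμ j = ⟨j.val, by omega⟩ := dif_pos h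

theorem trHom_ge {μ k : ℕ} (h0 : 0 < k) (hμ : k ≤ μ + 1) (j : Fin (μ+1)) (h : ¬ j.val < k) :
    trHom μ k h0 hμ j = ⟨k-1+1, by omega⟩ := dif_neg h

section Cone

variable {C : SSet.{0}} (x z : C _⦋0⦌) {n : ℕ} {i : Fin (n+1)}

theorem fr_horn' {μ : ℕ} (a : Fin (μ+1) →o Fin (n+2)) (k : ℕ) (h0 : 0 < k) (hμ : k ≤ μ + 1)
    (h1 : ∀ j : Fin (μ+1), j.val < k → (a j).val ≤ n)
    (ha : Set.range a ∪ {i.castSucc} ≠ Set.univ)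
    (hlast : Fin.last (n+1) ∈ Set.range a) :
    Set.range (fr a k h0 hμ h1) ∪ {i} ≠ Set.univ := by
  obtain ⟨t, ht⟩ := Set.ne_univ_iff_exists_notMem _ |>.mp ha
  simp only [Set.mem_union, Set.mem_range, Set.mem_singleton_iff, not_or, not_exists] at ht
  have htlast : t ≠ Fin.last (n+1) := by
    intro h
    obtain ⟨j, hj⟩ := hlast
    exact ht.1 j (by rw [hj, h])
  have htval : t.val ≤ n := by
    have h1 := t.isLt
    have h2 : t.val ≠ n + 1 := fun h => htlast (Fin.ext h)
    omega
  apply Set.ne_univ_iff_exists_notMem _ |>.mpr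
  refine ⟨⟨t.val, by omega⟩, ?_⟩
  simp only [Set.mem_union, Set.mem_range, Set.mem_singleton_iff, not_or, not_exists]
  constructor
  · intro j hj
    apply ht.1 ⟨j.val, by have := j.isLt; omega⟩
    apply Fin.ext
    have := congrArg Fin.val hj
    exact this
  · intro h
    apply ht.2
    apply Fin.ext
    have := congrArg Fin.val h
    simpa [Fin.castSucc] using this

/-- The adjoint `Λ[n+1, i] ⟶ C` of a horn `Λ[n, i] ⟶ Hom^▷(x,z)`, on simplices. -/
noncomputable def coneApp (u : (Λ[n,i] : SSet.{0}) ⟶ HomR C x z) (m : SimplexCategoryᵒᵖ)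
    (α : (Λ[n+1, i.castSucc] : SSet.{0}).obj m) : C.obj m :=
  if h0 : kOf (SSet.stdSimplex.asOrderHom α.1) = 0 then constSx C z m
  else if hA : m.unop.len < kOf (SSet.stdSimplex.asOrderHom α.1) then constSx C x m
  else
    C.map (tr m.unop.len (kOf (SSet.stdSimplex.asOrderHom α.1)) (by omega) (kOf_le _)).op
      (u.app (op ⦋kOf (SSet.stdSimplex.asOrderHom α.1) - 1⦌)
        ⟨SSet.stdSimplex.objMk
          (fr (SSet.stdSimplex.asOrderHom α.1) (kOf (SSet.stdSimplex.asOrderHom α.1)) (by omega) (kOf_le _)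
            (fun j hj => (lt_kOf_iff _ j).mp hj)),
         fr_horn' (SSet.stdSimplex.asOrderHom α.1) (kOf (SSet.stdSimplex.asOrderHom α.1)) (by omega) (kOf_le _)
           (fun j hj => (lt_kOf_iff _ j).mp hj) α.2
           ⟨⟨m.unop.len, by omega⟩, kOf_spec _ _ (by simp; omega)⟩⟩).1

theorem coneApp_z (u : (Λ[n,i] : SSet.{0}) ⟶ HomR C x z) (m : SimplexCategoryᵒᵖ)
    (α : (Λ[n+1, i.castSucc] : SSet.{0}).obj m) (h0 : kOf (SSet.stdSimplex.asOrderHom α.1) = 0) :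
    coneApp x z u m α = constSx C z m := dif_pos h0

theorem coneApp_x (u : (Λ[n,i] : SSet.{0}) ⟶ HomR C x z) (m : SimplexCategoryᵒᵖ)
    (α : (Λ[n+1, i.castSucc] : SSet.{0}).obj m) (hA : m.unop.len < kOf (SSet.stdSimplex.asOrderHom α.1)) :
    coneApp x z u m α = constSx C x m := by
  unfold coneApp
  rw [dif_neg (by omega), dif_pos hA]

/-- The front-restriction simplex in the horn `Λ[n,i]`. -/
noncomputable def frS {m : SimplexCategoryᵒᵖ} (α : (Λ[n+1, i.castSucc] : SSet.{0}).obj m)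
    (k : ℕ) (hk : kOf (SSet.stdSimplex.asOrderHom α.1) = k)
    (h0 : 0 < k) (hμ : k ≤ m.unop.len) :
    (Λ[n,i] : SSet.{0}).obj (op ⦋k - 1⦌) :=
  ⟨SSet.stdSimplex.objMk
      (fr (SSet.stdSimplex.asOrderHom α.1) k h0 (by have := kOf_le (SSet.stdSimplex.asOrderHom α.1); omega)
        (fun j hj => (lt_kOf_iff _ j).mp (by omega))),
   fr_horn' (SSet.stdSimplex.asOrderHom α.1) k h0 (by have := kOf_le (SSet.stdSimplex.asOrderHom α.1); omega)
     (fun j hj => (lt_kOf_iff _ j).mp (by omega)) α.2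
     ⟨⟨m.unop.len, by omega⟩, kOf_spec _ _ (by simp; omega)⟩⟩

theorem coneApp_mid (u : (Λ[n,i] : SSet.{0}) ⟶ HomR C x z) (m : SimplexCategoryᵒᵖ)
    (α : (Λ[n+1, i.castSucc] : SSet.{0}).obj m) (h0 : 0 < kOf (SSet.stdSimplex.asOrderHom α.1))
    (hμ : kOf (SSet.stdSimplex.asOrderHom α.1) ≤ m.unop.len) :
    coneApp x z u m α =
      C.map (tr m.unop.len (kOf (SSet.stdSimplex.asOrderHom α.1)) h0 (kOf_le _)).op
        (u.app (op ⦋kOf (SSet.stdSimplex.asOrderHom α.1) - 1⦌) (frS α _ rfl h0 hμ)).1 := by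
  unfold coneApp
  rw [dif_neg (by omega), dif_neg (by omega)]
  rfl

theorem coneApp_mid' (u : (Λ[n,i] : SSet.{0}) ⟶ HomR C x z) (m : SimplexCategoryᵒᵖ)
    (α : (Λ[n+1, i.castSucc] : SSet.{0}).obj m) (k : ℕ) (hk : kOf (SSet.stdSimplex.asOrderHom α.1) = k)
    (h0 : 0 < k) (hμ : k ≤ m.unop.len) :
    coneApp x z u m α =
      C.map (tr m.unop.len k h0 (by omega)).op
        (u.app (op ⦋k - 1⦌) (frS α k hk h0 hμ)).1 := by
  subst hk
  exact coneApp_mid x z u m α h0 hμ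

theorem map_op_eq {D : SSet.{0}} {a b : SimplexCategory} {f g : a ⟶ b} (h : f = g)
    (t : D.obj (op b)) : D.map f.op t = D.map g.op t := by rw [h]

theorem coneApp_natural (u : (Λ[n,i] : SSet.{0}) ⟶ HomR C x z) {m m' : SimplexCategoryᵒᵖ} (g : m ⟶ m')
    (α : (Λ[n+1, i.castSucc] : SSet.{0}).obj m) :
    coneApp x z u m' ((Λ[n+1, i.castSucc] : SSet.{0}).map g α) = C.map g (coneApp x z u m α) := by
  set α' : (Λ[n+1, i.castSucc] : SSet.{0}).obj m' := (Λ[n+1, i.castSucc] : SSet.{0}).map g α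
    with hα'
  have key : ∀ j, SSet.stdSimplex.asOrderHom α'.1 j = SSet.stdSimplex.asOrderHom α.1 (g.unop.toOrderHom j) :=
    fun _ => rfl
  have hiff : ∀ j : Fin (m'.unop.len+1),
      (j.val < kOf (SSet.stdSimplex.asOrderHom α'.1) ↔
        (g.unop.toOrderHom j).val < kOf (SSet.stdSimplex.asOrderHom α.1)) :=
    fun j => (lt_kOf_iff _ j).trans (Iff.symm (lt_kOf_iff _ _))
  rcases Nat.eq_zero_or_pos (kOf (SSet.stdSimplex.asOrderHom α.1)) with h0 | h0
  · -- k = 0 : everything is the last vertex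
    have h0' : kOf (SSet.stdSimplex.asOrderHom α'.1) = 0 := by
      refine kOf_eq _ 0 (by omega) (fun j hj => absurd hj (by omega)) ?_
      intro j _
      rw [key j]
      exact kOf_spec _ _ (by omega)
    rw [coneApp_z x z u m' α' h0', coneApp_z x z u m α h0, constSx_natural]
  rcases Nat.lt_or_ge m.unop.len (kOf (SSet.stdSimplex.asOrderHom α.1)) with hA | hmid
  · -- k = μ + 1 : the simplex lies in the front face
    have hA' : m'.unop.len < kOf (SSet.stdSimplex.asOrderHom α'.1) := by
      have : kOf (SSet.stdSimplex.asOrderHom α'.1) = m'.unop.len + 1 := by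
        refine kOf_eq _ _ (le_refl _) ?_ (fun j hj => absurd j.isLt (by omega))
        intro j _
        rw [← lt_kOf_iff]
        exact (hiff j).mpr (by have := (g.unop.toOrderHom j).isLt; omega)
      omega
    rw [coneApp_x x z u m' α' hA', coneApp_x x z u m α hA, constSx_natural]
  · -- middle case for α
    rw [coneApp_mid x z u m α h0 hmid]
    rcases Nat.eq_zero_or_pos (kOf (SSet.stdSimplex.asOrderHom α'.1)) with h0' | h0'
    · -- the image is concentrated at the last vertex
      rw [coneApp_z x z u m' α' h0']
      have hlast : C.map (lastH (kOf (SSet.stdSimplex.asOrderHom α.1) - 1)).op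
          (u.app (op ⦋kOf (SSet.stdSimplex.asOrderHom α.1) - 1⦌) (frS α _ rfl h0 hmid)).1 = z :=
        (u.app _ (frS α _ rfl h0 hmid)).2.1
      have hcomp : g.unop ≫ tr m.unop.len (kOf (SSet.stdSimplex.asOrderHom α.1)) h0 (kOf_le _) =
          toPt m' ≫ lastH (kOf (SSet.stdSimplex.asOrderHom α.1) - 1) := by
        apply SimplexCategory.Hom.ext; apply OrderHom.ext; funext j
        show trHom m.unop.len (kOf (SSet.stdSimplex.asOrderHom α.1)) h0 (kOf_le _) (g.unop.toOrderHom j)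
          = Fin.last _
        rw [trHom_ge h0 (kOf_le _) _ (fun h => by
          have := (hiff j).mpr h
          omega)]
        rfl
      have e1 : C.map g (C.map (tr m.unop.len (kOf (SSet.stdSimplex.asOrderHom α.1)) h0 (kOf_le _)).op
          (u.app (op ⦋kOf (SSet.stdSimplex.asOrderHom α.1) - 1⦌) (frS α _ rfl h0 hmid)).1) = constSx C z m' := by
        rw [← FunctorToTypes.map_comp_apply]
        show C.map (g.unop ≫ tr m.unop.len (kOf (SSet.stdSimplex.asOrderHom α.1)) h0 (kOf_le _)).op _ = _
        rw [map_op_eq hcomp, op_comp, FunctorToTypes.map_comp_apply, hlast]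
        rfl
      exact e1.symm
    rcases Nat.lt_or_ge m'.unop.len (kOf (SSet.stdSimplex.asOrderHom α'.1)) with hA' | hmid'
    · -- the image lands in the front face
      rw [coneApp_x x z u m' α' hA']
      have hfront : C.map (frontH ⦋kOf (SSet.stdSimplex.asOrderHom α.1) - 1⦌).op
          (u.app (op ⦋kOf (SSet.stdSimplex.asOrderHom α.1) - 1⦌) (frS α _ rfl h0 hmid)).1 =
          constSx C x (op ⦋kOf (SSet.stdSimplex.asOrderHom α.1) - 1⦌) :=
        (u.app _ (frS α _ rfl h0 hmid)).2.2
      have hglt : ∀ j : Fin (m'.unop.len + 1),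
          (g.unop.toOrderHom j).val < kOf (SSet.stdSimplex.asOrderHom α.1) :=
        fun j => (hiff j).mp (by have := j.isLt; omega)
      have hcomp : g.unop ≫ tr m.unop.len (kOf (SSet.stdSimplex.asOrderHom α.1)) h0 (kOf_le _) =
          (SimplexCategory.Hom.mk ⟨fun j => ⟨(g.unop.toOrderHom j).val, by
              have := hglt j
              show _ < kOf (SSet.stdSimplex.asOrderHom α.1) - 1 + 1
              omega⟩,
            fun j j' hjj => g.unop.toOrderHom.monotone hjj⟩ :
              m'.unop ⟶ ⦋kOf (SSet.stdSimplex.asOrderHom α.1) - 1⦌) ≫ frontH _ := by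
        apply SimplexCategory.Hom.ext; apply OrderHom.ext; funext j
        show trHom m.unop.len (kOf (SSet.stdSimplex.asOrderHom α.1)) h0 (kOf_le _) (g.unop.toOrderHom j)
          = Fin.castSucc _
        rw [trHom_lt h0 (kOf_le _) _ (hglt j)]
        apply Fin.ext
        rfl
      have e1 : C.map g (C.map (tr m.unop.len (kOf (SSet.stdSimplex.asOrderHom α.1)) h0 (kOf_le _)).op
          (u.app (op ⦋kOf (SSet.stdSimplex.asOrderHom α.1) - 1⦌) (frS α _ rfl h0 hmid)).1) = constSx C x m' := by
        rw [← FunctorToTypes.map_comp_apply]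
        show C.map (g.unop ≫ tr m.unop.len (kOf (SSet.stdSimplex.asOrderHom α.1)) h0 (kOf_le _)).op _ = _
        rw [map_op_eq hcomp, op_comp, FunctorToTypes.map_comp_apply, hfront, constSx_natural]
      exact e1.symm
    · -- middle case for the image
      rw [coneApp_mid x z u m' α' h0' hmid']
      have hlt : ∀ j : Fin (kOf (SSet.stdSimplex.asOrderHom α'.1) - 1 + 1), j.val < m'.unop.len + 1 := by
        intro j
        have h1 := j.isLt
        have h2 := kOf_le (SSet.stdSimplex.asOrderHom α'.1)
        omega
      have hlt2 : ∀ j : Fin (kOf (SSet.stdSimplex.asOrderHom α'.1) - 1 + 1),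
          (g.unop.toOrderHom ⟨j.val, hlt j⟩).val < kOf (SSet.stdSimplex.asOrderHom α.1) - 1 + 1 := by
        intro j
        have := (hiff ⟨j.val, hlt j⟩).mp (by show j.val < _; have := j.isLt; omega)
        omega
      set ζ : (⦋kOf (SSet.stdSimplex.asOrderHom α'.1) - 1⦌ : SimplexCategory) ⟶
          ⦋kOf (SSet.stdSimplex.asOrderHom α.1) - 1⦌ :=
        SimplexCategory.Hom.mk ⟨fun j => ⟨(g.unop.toOrderHom ⟨j.val, hlt j⟩).val, hlt2 j⟩,
          fun j j' hjj => g.unop.toOrderHom.monotone (Fin.mk_le_mk.mpr hjj)⟩ with hζ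
      have hfr : frS α' _ rfl h0' hmid' = (Λ[n,i] : SSet.{0}).map ζ.op (frS α _ rfl h0 hmid) :=
        Subtype.ext rfl
      have hcomp : g.unop ≫ tr m.unop.len (kOf (SSet.stdSimplex.asOrderHom α.1)) h0 (kOf_le _) =
          tr m'.unop.len (kOf (SSet.stdSimplex.asOrderHom α'.1)) h0' (kOf_le _) ≫ joinH ζ := by
        apply SimplexCategory.Hom.ext; apply OrderHom.ext; funext j
        show trHom m.unop.len (kOf (SSet.stdSimplex.asOrderHom α.1)) h0 (kOf_le _) (g.unop.toOrderHom j)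
          = joinFun ζ.toOrderHom
            (trHom m'.unop.len (kOf (SSet.stdSimplex.asOrderHom α'.1)) h0' (kOf_le _) j)
        by_cases hj : j.val < kOf (SSet.stdSimplex.asOrderHom α'.1)
        · rw [trHom_lt h0' (kOf_le _) _ hj, trHom_lt h0 (kOf_le _) _ ((hiff j).mp hj)]
          rw [joinFun_apply_lt _ _
            (show j.val < kOf (SSet.stdSimplex.asOrderHom α'.1) - 1 + 1 by omega)]
          apply Fin.ext
          rfl
        · rw [trHom_ge h0' (kOf_le _) _ hj,
            trHom_ge h0 (kOf_le _) _ (fun h => hj ((hiff j).mpr h))]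
          rw [joinFun_apply_last _ _
            (show ¬ (kOf (SSet.stdSimplex.asOrderHom α'.1) - 1 + 1) <
              (kOf (SSet.stdSimplex.asOrderHom α'.1) - 1 + 1) by omega)]
          rfl
      have e1 : C.map g (C.map (tr m.unop.len (kOf (SSet.stdSimplex.asOrderHom α.1)) h0 (kOf_le _)).op
          (u.app (op ⦋kOf (SSet.stdSimplex.asOrderHom α.1) - 1⦌) (frS α _ rfl h0 hmid)).1) =
          C.map (tr m'.unop.len (kOf (SSet.stdSimplex.asOrderHom α'.1)) h0' (kOf_le _)).op
            (u.app (op ⦋kOf (SSet.stdSimplex.asOrderHom α'.1) - 1⦌) (frS α' _ rfl h0' hmid')).1 := by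
        rw [hfr, FunctorToTypes.naturality u ζ.op (frS α _ rfl h0 hmid)]
        rw [← FunctorToTypes.map_comp_apply]
        show C.map (g.unop ≫ tr m.unop.len (kOf (SSet.stdSimplex.asOrderHom α.1)) h0 (kOf_le _)).op _ =
          C.map (tr m'.unop.len (kOf (SSet.stdSimplex.asOrderHom α'.1)) h0' (kOf_le _)).op
            (C.map (joinH ζ).op (u.app (op ⦋kOf (SSet.stdSimplex.asOrderHom α.1) - 1⦌) (frS α _ rfl h0 hmid)).1)
        rw [map_op_eq hcomp, op_comp, FunctorToTypes.map_comp_apply]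
      exact e1.symm

/-- The adjoint cone map `Λ[n+1, i] ⟶ C` of a horn `Λ[n, i] ⟶ Hom^▷(x,z)`. -/
noncomputable def coneMap (u : (Λ[n,i] : SSet.{0}) ⟶ HomR C x z) :
    (Λ[n+1, i.castSucc] : SSet.{0}) ⟶ C where
  app m := TypeCat.ofHom fun α => coneApp x z u m α
  naturality m m' g := by ext α; exact coneApp_natural x z u g α

/-- The extension of a horn simplex by the cone point. -/
def hornJoin {m : SimplexCategoryᵒᵖ} (β : (Λ[n,i] : SSet.{0}).obj m) :
    (Λ[n+1, i.castSucc] : SSet.{0}).obj (op ⦋m.unop.len + 1⦌) := by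
  refine ⟨ULift.up (joinH β.1.down), ?_⟩
  obtain ⟨t, ht⟩ := Set.ne_univ_iff_exists_notMem _ |>.mp β.2
  simp only [Set.mem_union, Set.mem_range, Set.mem_singleton_iff, not_or, not_exists] at ht
  apply Set.ne_univ_iff_exists_notMem _ |>.mpr
  refine ⟨t.castSucc, ?_⟩
  simp only [Set.mem_union, Set.mem_range, Set.mem_singleton_iff, not_or, not_exists]
  constructor
  · intro j hj
    have hj' : joinFun β.1.down.toOrderHom j = t.castSucc := hj
    by_cases h : j.val < m.unop.len + 1
    · rw [joinFun_apply_lt _ _ h] at hj'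
      exact ht.1 _ (Fin.castSucc_injective _ hj')
    · rw [joinFun_apply_last _ _ h] at hj'
      have h1 := congrArg Fin.val hj'
      simp [Fin.last] at h1
      have h2 := t.isLt
      show False
      omega
  · intro h
    exact ht.2 (Fin.castSucc_injective _ h)

theorem kOf_hornJoin {m : SimplexCategoryᵒᵖ} (β : (Λ[n,i] : SSet.{0}).obj m) :
    kOf (SSet.stdSimplex.asOrderHom (hornJoin β).1) = m.unop.len + 1 := by
  apply kOf_eq _ _ (by show _ ≤ m.unop.len + 1 + 1; omega)
  · intro j hj
    have hj' : j.val < m.unop.len + 1 := hj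
    have : SSet.stdSimplex.asOrderHom (hornJoin β).1 j = joinFun β.1.down.toOrderHom j := rfl
    rw [this, joinFun_apply_lt _ _ hj']
    show (β.1.down.toOrderHom _).val ≤ n
    exact Nat.lt_succ_iff.mp (β.1.down.toOrderHom _).isLt
  · intro j hj
    have hj' : ¬ j.val < m.unop.len + 1 := by
      have : (m.unop.len + 1 : ℕ) ≤ j.val := hj
      omega
    have : SSet.stdSimplex.asOrderHom (hornJoin β).1 j = joinFun β.1.down.toOrderHom j := rfl
    rw [this, joinFun_apply_last _ _ hj']

theorem tr_self (μ : ℕ) (h0 : 0 < μ + 1) (hμ : μ + 1 ≤ μ + 1 + 1) :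
    tr (μ+1) (μ+1) h0 hμ = 𝟙 (⦋μ+1⦌ : SimplexCategory) := by
  apply SimplexCategory.Hom.ext; apply OrderHom.ext; funext j
  show trHom (μ+1) (μ+1) h0 hμ j = j
  have hjv : j.val < μ + 1 + 1 := j.isLt
  by_cases h : j.val < μ + 1
  · rw [trHom_lt h0 hμ _ h]
    rfl
  · rw [trHom_ge h0 hμ _ h]
    apply Fin.ext
    show μ + 1 - 1 + 1 = j.val
    omega

/-- Key computation: the cone map restricted along `hornJoin` recovers `u`. -/
theorem coneMap_hornJoin (u : (Λ[n,i] : SSet.{0}) ⟶ HomR C x z) {m : SimplexCategoryᵒᵖ} (β : (Λ[n,i] : SSet.{0}).obj m) :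
    (coneMap x z u).app (op ⦋m.unop.len + 1⦌) (hornJoin β) = (u.app m β).1 := by
  show coneApp x z u _ (hornJoin β) = _
  rw [coneApp_mid' x z u _ (hornJoin β) (m.unop.len + 1) (kOf_hornJoin β) (by omega)
    (by show _ ≤ m.unop.len + 1; omega)]
  have hfr : frS (hornJoin β) (m.unop.len + 1) (kOf_hornJoin β) (by omega)
      (by show _ ≤ m.unop.len + 1; omega) = β := by
    apply Subtype.ext
    refine ULift.down_injective ?_
    apply SimplexCategory.Hom.ext; apply OrderHom.ext; funext j
    apply Fin.ext
    have h1 : j.val < m.unop.len + 1 := j.isLt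
    show (SSet.stdSimplex.asOrderHom (hornJoin β).1 ⟨j.val, _⟩).val = _
    have : SSet.stdSimplex.asOrderHom (hornJoin β).1 ⟨j.val, Nat.lt_succ_of_lt h1⟩ =
        joinFun β.1.down.toOrderHom ⟨j.val, Nat.lt_succ_of_lt h1⟩ := rfl
    rw [this, joinFun_apply_lt _ _ (show j.val < m.unop.len + 1 from h1)]
    rfl
  rw [hfr]
  show C.map (tr (m.unop.len + 1) (m.unop.len + 1) (Nat.succ_pos _) (by omega)).op
    (u.app m β).1 = (u.app m β).1
  rw [map_op_eq (tr_self m.unop.len _ _), op_id]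
  exact FunctorToTypes.map_id_apply C _

/-- The vertex at the cone point, as a simplex of the big horn. -/
def hornLast (hn : 1 ≤ n) : (Λ[n+1, i.castSucc] : SSet.{0}).obj (op ⦋0⦌) := by
  refine ⟨ULift.up (lastH n), ?_⟩
  apply Set.ne_univ_iff_exists_notMem _ |>.mpr
  refine ⟨if i.val = 0 then ⟨1, by omega⟩ else ⟨0, by omega⟩, ?_⟩
  simp only [Set.mem_union, Set.mem_range, Set.mem_singleton_iff, not_or, not_exists]
  constructor
  · intro j h
    have h1 : SSet.stdSimplex.asOrderHom (ULift.up (lastH n) : Δ[n+1].obj (op ⦋0⦌)) j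
        = Fin.last (n+1) := rfl
    rw [h1] at h
    have := congrArg Fin.val h
    by_cases h2 : i.val = 0 <;> simp [h2, Fin.last] at this <;> omega
  · intro h
    have := congrArg Fin.val h
    have h3 : (i.castSucc).val = i.val := rfl
    by_cases h2 : i.val = 0 <;> simp [h2, h3] at this <;> omega

theorem coneMap_hornLast (hn : 1 ≤ n) (u : (Λ[n,i] : SSet.{0}) ⟶ HomR C x z) :
    (coneMap x z u).app (op ⦋0⦌) (hornLast hn) = z := by
  show coneApp x z u _ (hornLast hn) = z
  have h0 : kOf (SSet.stdSimplex.asOrderHom (hornLast (i := i) hn).1) = 0 := by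
    refine kOf_eq _ 0 (by omega) (fun j hj => absurd hj (by omega)) (fun j _ => rfl)
  rw [coneApp_z x z u _ _ h0, constSx_op0]

/-- The front face, as a simplex of the big horn. -/
def hornFront : (Λ[n+1, i.castSucc] : SSet.{0}).obj (op ⦋n⦌) := by
  refine ⟨ULift.up (frontH ⦋n⦌), ?_⟩
  apply Set.ne_univ_iff_exists_notMem _ |>.mpr
  refine ⟨Fin.last (n+1), ?_⟩
  simp only [Set.mem_union, Set.mem_range, Set.mem_singleton_iff, not_or, not_exists]
  constructor
  · intro j h
    have h1 : SSet.stdSimplex.asOrderHom (ULift.up (frontH ⦋n⦌) : Δ[n+1].obj (op ⦋n⦌)) j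
        = Fin.castSucc j := rfl
    rw [h1] at h
    have := congrArg Fin.val h
    have h2 := j.isLt
    simp [Fin.last, Fin.castSucc] at this
    omega
  · intro h
    have := congrArg Fin.val h
    have h2 := i.isLt
    simp [Fin.last, Fin.castSucc] at this
    omega

theorem coneMap_hornFront (u : (Λ[n,i] : SSet.{0}) ⟶ HomR C x z) :
    (coneMap x z u).app (op ⦋n⦌) (hornFront (i := i)) = constSx C x (op ⦋n⦌) := by
  show coneApp x z u _ hornFront = _
  have hA : (op (⦋n⦌ : SimplexCategory)).unop.len <
      kOf (SSet.stdSimplex.asOrderHom (hornFront (i := i)).1) := by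
    have : kOf (SSet.stdSimplex.asOrderHom (hornFront (i := i)).1) = n + 1 := by
      refine kOf_eq _ (n+1) (by show n+1 ≤ n+1; omega) ?_ ?_
      · intro j hj
        show (Fin.castSucc j).val ≤ n
        have h1 : j.val < n + 1 := j.isLt
        simp [Fin.castSucc]
        omega
      · intro j hj
        have h1 : j.val < n + 1 := j.isLt
        exact absurd hj (by omega)
    rw [this]
    show n < n + 1
    omega
  rw [coneApp_x x z u _ _ hA]

/-- Commutation of the cone construction with a projection. -/
theorem coneMap_comp {D : SSet.{0}} (p : C ⟶ D) (u : (Λ[n,i] : SSet.{0}) ⟶ HomR C x z)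
    (v : Δ[n] ⟶ HomR D (p.app (op ⦋0⦌) x) (p.app (op ⦋0⦌) z))
    (hcomm : u ≫ homRMap p x z = (SSet.horn n i).ι ≫ v) :
    coneMap x z u ≫ p = (SSet.horn (n+1) i.castSucc).ι ≫
      simplexMap (v.app (op ⦋n⦌) (stdId n)).1 := by
  set τD := (v.app (op ⦋n⦌) (stdId n)).1 with hτD
  have hτlast : D.map (lastH n).op τD = p.app (op ⦋0⦌) z :=
    (v.app (op ⦋n⦌) (stdId n)).2.1
  have hτfront : D.map (frontH ⦋n⦌).op τD = constSx D (p.app (op ⦋0⦌) x) (op ⦋n⦌) :=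
    (v.app (op ⦋n⦌) (stdId n)).2.2
  have hv : ∀ (m : SimplexCategoryᵒᵖ) (b : Δ[n].obj m),
      (v.app m b).1 = D.map (joinH b.down).op τD :=
    fun m b => congrArg Subtype.val (yoneda_pointwise v m b)
  have hu : ∀ (m : SimplexCategoryᵒᵖ) (β : (Λ[n,i] : SSet.{0}).obj m),
      p.app (op ⦋m.unop.len + 1⦌) (u.app m β).1 = (v.app m β.1).1 :=
    fun m β => congrArg Subtype.val
      (congrArg (fun (w : (Λ[n,i] : SSet.{0}) ⟶ HomR D _ _) => w.app m β) hcomm)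
  apply SSet.hom_ext
  intro m
  ext α
  show p.app m (coneApp x z u m α) = D.map α.1.down.op τD
  rcases Nat.eq_zero_or_pos (kOf (SSet.stdSimplex.asOrderHom α.1)) with h0 | h0
  · rw [coneApp_z x z u m α h0, constSx_map]
    have ha : α.1.down = toPt m ≫ lastH n := by
      apply SimplexCategory.Hom.ext; apply OrderHom.ext; funext j
      exact kOf_spec (SSet.stdSimplex.asOrderHom α.1) j (by omega)
    rw [map_op_eq ha τD, op_comp, FunctorToTypes.map_comp_apply, hτlast]
    rfl
  rcases Nat.lt_or_ge m.unop.len (kOf (SSet.stdSimplex.asOrderHom α.1)) with hA | hmid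
  · rw [coneApp_x x z u m α hA, constSx_map]
    have ha : α.1.down = (SimplexCategory.Hom.mk
        ⟨fun j => ⟨(SSet.stdSimplex.asOrderHom α.1 j).val, by
            have h9 := (lt_kOf_iff (SSet.stdSimplex.asOrderHom α.1) j).mp
              (Nat.lt_of_le_of_lt (Nat.lt_succ_iff.mp j.isLt) hA)
            show _ < n + 1
            omega⟩,
          fun j j' hjj => (SSet.stdSimplex.asOrderHom α.1).monotone hjj⟩ : m.unop ⟶ ⦋n⦌) ≫ frontH ⦋n⦌ := by
      apply SimplexCategory.Hom.ext; apply OrderHom.ext; funext j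
      apply Fin.ext
      rfl
    rw [map_op_eq ha τD, op_comp, FunctorToTypes.map_comp_apply, hτfront, constSx_natural]
  · rw [coneApp_mid x z u m α h0 hmid]
    have hnat : p.app m (C.map (tr m.unop.len (kOf (SSet.stdSimplex.asOrderHom α.1)) h0 (kOf_le _)).op
          (u.app (op ⦋kOf (SSet.stdSimplex.asOrderHom α.1) - 1⦌) (frS α _ rfl h0 hmid)).1)
        = D.map (tr m.unop.len (kOf (SSet.stdSimplex.asOrderHom α.1)) h0 (kOf_le _)).op
          (p.app (op ⦋kOf (SSet.stdSimplex.asOrderHom α.1) - 1 + 1⦌)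
            (u.app (op ⦋kOf (SSet.stdSimplex.asOrderHom α.1) - 1⦌) (frS α _ rfl h0 hmid)).1) :=
      FunctorToTypes.naturality p _ _
    have hu' : p.app (op ⦋kOf (SSet.stdSimplex.asOrderHom α.1) - 1 + 1⦌)
          (u.app (op ⦋kOf (SSet.stdSimplex.asOrderHom α.1) - 1⦌) (frS α _ rfl h0 hmid)).1
        = (v.app (op ⦋kOf (SSet.stdSimplex.asOrderHom α.1) - 1⦌) (frS α _ rfl h0 hmid).1).1 :=
      hu _ (frS α _ rfl h0 hmid)
    rw [hnat, hu', hv (op ⦋kOf (SSet.stdSimplex.asOrderHom α.1) - 1⦌) (frS α _ rfl h0 hmid).1,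
      ← FunctorToTypes.map_comp_apply]
    have ha : α.1.down = tr m.unop.len (kOf (SSet.stdSimplex.asOrderHom α.1)) h0 (kOf_le _) ≫
        joinH (frS α _ rfl h0 hmid).1.down := by
      apply SimplexCategory.Hom.ext; apply OrderHom.ext; funext j
      show SSet.stdSimplex.asOrderHom α.1 j = joinFun (frS α _ rfl h0 hmid).1.down.toOrderHom
        (trHom m.unop.len (kOf (SSet.stdSimplex.asOrderHom α.1)) h0 (kOf_le _) j)
      by_cases hj : j.val < kOf (SSet.stdSimplex.asOrderHom α.1)
      · rw [trHom_lt h0 (kOf_le _) _ hj, joinFun_apply_lt _ _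
          (show j.val < kOf (SSet.stdSimplex.asOrderHom α.1) - 1 + 1 by omega)]
        apply Fin.ext
        have : (lt_kOf_iff (SSet.stdSimplex.asOrderHom α.1) j).mp hj = (lt_kOf_iff _ j).mp hj := rfl
        show (SSet.stdSimplex.asOrderHom α.1 j).val = (SSet.stdSimplex.asOrderHom α.1 ⟨j.val, _⟩).val
        rfl
      · rw [trHom_ge h0 (kOf_le _) _ hj, joinFun_apply_last _ _
          (show ¬ (kOf (SSet.stdSimplex.asOrderHom α.1) - 1 + 1) <
            (kOf (SSet.stdSimplex.asOrderHom α.1) - 1 + 1) by omega)]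
        exact kOf_spec _ j (by omega)
    rw [show D.map α.1.down.op τD = D.map (tr m.unop.len (kOf (SSet.stdSimplex.asOrderHom α.1)) h0
        (kOf_le _) ≫ joinH (frS α _ rfl h0 hmid).1.down).op τD from map_op_eq ha τD]
    rfl

/-- The slice map `Δ[n] ⟶ Hom^▷(x,z)` determined by an `(n+1)`-simplex with last vertex `z`
and constant front face. -/
def sliceOf (τ : C.obj (op ⦋n+1⦌)) (h1 : C.map (lastH n).op τ = z)
    (h2 : C.map (frontH ⦋n⦌).op τ = constSx C x (op ⦋n⦌)) :
    Δ[n] ⟶ HomR C x z where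
  app m := TypeCat.ofHom fun b => ⟨C.map (joinH b.down).op τ, by
    constructor
    · rw [← FunctorToTypes.map_comp_apply, ← op_comp, lastH_joinH]
      exact h1
    · rw [← FunctorToTypes.map_comp_apply, ← op_comp, frontH_joinH, op_comp,
        FunctorToTypes.map_comp_apply, h2, constSx_natural]⟩
  naturality m m' g := by
    ext b
    apply Subtype.ext
    show C.map (joinH (g.unop ≫ b.down)).op τ = C.map (joinH g.unop).op (C.map (joinH b.down).op τ)
    rw [joinH_comp, ← FunctorToTypes.map_comp_apply, ← op_comp]

/-- Full lifting transfer: a filler for the cone problem induces a filler for the original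
lifting problem against `homRMap`. -/
theorem cone_lift {D : SSet.{0}} (hn : 1 ≤ n) (u : (Λ[n,i] : SSet.{0}) ⟶ HomR C x z) (p : C ⟶ D)
    (v : Δ[n] ⟶ HomR D (p.app (op ⦋0⦌) x) (p.app (op ⦋0⦌) z))
    (hcomm : u ≫ homRMap p x z = (SSet.horn n i).ι ≫ v)
    (w : Δ[n+1] ⟶ C)
    (hw1 : (SSet.horn (n+1) i.castSucc).ι ≫ w = coneMap x z u)
    (hw2 : w ≫ p = simplexMap (v.app (op ⦋n⦌) (stdId n)).1) :
    PlainLift ((SSet.horn n i).ι) (homRMap p x z) u v := by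
  set τC := w.app (op ⦋n+1⦌) (stdId (n+1)) with hτC
  have hwp : ∀ (m : SimplexCategoryᵒᵖ) (b : Δ[n+1].obj m),
      w.app m b = C.map b.down.op τC := fun m b => yoneda_pointwise w m b
  have hτlast : C.map (lastH n).op τC = z := by
    have e1 := hwp (op ⦋0⦌) (hornLast (i := i) hn).1
    have e2 : w.app (op ⦋0⦌) (hornLast (i := i) hn).1 =
        ((SSet.horn (n+1) i.castSucc).ι ≫ w).app (op ⦋0⦌) (hornLast (i := i) hn) := rfl
    rw [hw1, coneMap_hornLast x z hn u] at e2
    exact e1.symm.trans e2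
  have hτfront : C.map (frontH ⦋n⦌).op τC = constSx C x (op ⦋n⦌) := by
    have e1 := hwp (op ⦋n⦌) (hornFront (i := i)).1
    have e2 : w.app (op ⦋n⦌) (hornFront (i := i)).1 =
        ((SSet.horn (n+1) i.castSucc).ι ≫ w).app (op ⦋n⦌) (hornFront (i := i)) := rfl
    rw [hw1, coneMap_hornFront x z u] at e2
    exact e1.symm.trans e2
  refine ⟨sliceOf x z τC hτlast hτfront, ?_, ?_⟩
  · apply SSet.hom_ext
    intro m
    ext β
    apply Subtype.ext
    show C.map (joinH β.1.down).op τC = (u.app m β).1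
    have e1 := hwp (op ⦋m.unop.len + 1⦌) (hornJoin β).1
    have e2 : w.app (op ⦋m.unop.len + 1⦌) (hornJoin β).1 =
        ((SSet.horn (n+1) i.castSucc).ι ≫ w).app (op ⦋m.unop.len + 1⦌) (hornJoin β) := rfl
    rw [hw1, coneMap_hornJoin x z u β] at e2
    exact e1.symm.trans e2
  · apply SSet.hom_ext
    intro m
    ext b
    apply Subtype.ext
    show p.app (op ⦋m.unop.len + 1⦌) (C.map (joinH b.down).op τC) = (v.app m b).1
    have hnat : p.app (op ⦋m.unop.len + 1⦌) (C.map (joinH b.down).op τC)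
        = D.map (joinH b.down).op (p.app (op ⦋n+1⦌) τC) :=
      FunctorToTypes.naturality p _ _
    have hpτ : p.app (op ⦋n+1⦌) τC = (v.app (op ⦋n⦌) (stdId n)).1 := by
      have e3 : (w ≫ p).app (op ⦋n+1⦌) (stdId (n+1)) =
          p.app (op ⦋n+1⦌) τC := rfl
      have e4 : (simplexMap (v.app (op ⦋n⦌) (stdId n)).1).app (op ⦋n+1⦌)
          (stdId (n+1)) = (v.app (op ⦋n⦌) (stdId n)).1 :=
        simplexMap_id _
      rw [hw2] at e3
      exact e3.symm.trans e4
    rw [hnat, hpτ]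
    exact (congrArg Subtype.val (yoneda_pointwise v m b)).symm

/-- If all vertices of a horn simplex avoid the cone point, the cone map is constant at `x`. -/
theorem coneMap_front (u : (Λ[n,i] : SSet.{0}) ⟶ HomR C x z) {m : SimplexCategoryᵒᵖ}
    (α : (Λ[n+1, i.castSucc] : SSet.{0}).obj m)
    (h : ∀ j, (SSet.stdSimplex.asOrderHom α.1 j).val ≤ n) :
    (coneMap x z u).app m α = constSx C x m := by
  apply coneApp_x
  have : kOf (SSet.stdSimplex.asOrderHom α.1) = m.unop.len + 1 := by
    refine kOf_eq _ _ (le_refl _) (fun j _ => h j) (fun j hj => absurd j.isLt (by omega))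
  omega

/-- The cone map sends degenerate triangles to degenerate triangles. -/
theorem coneMap_deg (u : (Λ[n,i] : SSet.{0}) ⟶ HomR C x z)
    (σS : (Λ[n+1, i.castSucc] : SSet.{0}).obj (op ⦋2⦌))
    (h : DegTri Δ[n+1] σS.1) :
    DegTri C ((coneMap x z u).app (op ⦋2⦌) σS) := by
  obtain ⟨e, he | he⟩ := h
  · have hid : SimplexCategory.δ (0 : Fin 3) ≫ SimplexCategory.σ (0 : Fin 2) =
        𝟙 (⦋1⦌ : SimplexCategory) := SimplexCategory.δ_comp_σ_self
    set e' : (Λ[n+1, i.castSucc] : SSet.{0}).obj (op ⦋1⦌) :=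
      (Λ[n+1, i.castSucc] : SSet.{0}).map (SimplexCategory.δ (0 : Fin 3)).op σS with he'
    have hσ : σS = (Λ[n+1, i.castSucc] : SSet.{0}).map (SimplexCategory.σ (0 : Fin 2)).op e' := by
      apply Subtype.ext
      refine ULift.down_injective ?_
      show σS.1.down = SimplexCategory.σ (0 : Fin 2) ≫ SimplexCategory.δ (0 : Fin 3) ≫ σS.1.down
      have hdown : σS.1.down = SimplexCategory.σ (0 : Fin 2) ≫ e.down := congrArg ULift.down he
      rw [hdown, ← Category.assoc, ← Category.assoc, Category.assoc
        (SimplexCategory.σ (0 : Fin 2)), hid, Category.comp_id]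
    refine ⟨(coneMap x z u).app (op ⦋1⦌) e', Or.inl ?_⟩
    rw [hσ]
    have hn := FunctorToTypes.naturality (coneMap x z u) (SimplexCategory.σ (0 : Fin 2)).op e'
    exact hn
  · have hid : SimplexCategory.δ (1 : Fin 3) ≫ SimplexCategory.σ (1 : Fin 2) =
        𝟙 (⦋1⦌ : SimplexCategory) := SimplexCategory.δ_comp_σ_self
    set e' : (Λ[n+1, i.castSucc] : SSet.{0}).obj (op ⦋1⦌) :=
      (Λ[n+1, i.castSucc] : SSet.{0}).map (SimplexCategory.δ (1 : Fin 3)).op σS with he'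
    have hσ : σS = (Λ[n+1, i.castSucc] : SSet.{0}).map (SimplexCategory.σ (1 : Fin 2)).op e' := by
      apply Subtype.ext
      refine ULift.down_injective ?_
      show σS.1.down = SimplexCategory.σ (1 : Fin 2) ≫ SimplexCategory.δ (1 : Fin 3) ≫ σS.1.down
      have hdown : σS.1.down = SimplexCategory.σ (1 : Fin 2) ≫ e.down := congrArg ULift.down he
      rw [hdown, ← Category.assoc, ← Category.assoc, Category.assoc
        (SimplexCategory.σ (1 : Fin 2)), hid, Category.comp_id]
    refine ⟨(coneMap x z u).app (op ⦋1⦌) e', Or.inr ?_⟩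
    rw [hσ]
    have hn := FunctorToTypes.naturality (coneMap x z u) (SimplexCategory.σ (1 : Fin 2)).op e'
    exact hn

/-- Characterisation of `hornJoin` by its underlying simplex. -/
theorem eq_hornJoin {m : SimplexCategoryᵒᵖ} (β : (Λ[n,i] : SSet.{0}).obj m)
    (t : (Λ[n+1, i.castSucc] : SSet.{0}).obj (op ⦋m.unop.len + 1⦌))
    (h : t.1.down = joinH β.1.down) : t = hornJoin β :=
  Subtype.ext (ULift.down_injective h)

end Cone

section SimplexMapLemmas

variable {D : SSet.{0}} {n : ℕ}

/-- `simplexMap` sends degenerate triangles to degenerate triangles. -/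
theorem simplexMap_deg {N : ℕ} (τ : D.obj (op ⦋N⦌)) (b : Δ[N] _⦋2⦌)
    (h : DegTri Δ[N] b) : DegTri D ((simplexMap τ).app (op ⦋2⦌) b) := by
  obtain ⟨e, he | he⟩ := h
  · refine ⟨(simplexMap τ).app (op ⦋1⦌) e, Or.inl ?_⟩
    rw [he]
    exact FunctorToTypes.naturality (simplexMap τ) (SimplexCategory.σ (0 : Fin 2)).op e
  · refine ⟨(simplexMap τ).app (op ⦋1⦌) e, Or.inr ?_⟩
    rw [he]
    exact FunctorToTypes.naturality (simplexMap τ) (SimplexCategory.σ (1 : Fin 2)).op e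

/-- `simplexMap` is constant on simplices of the front face when the front face of `τ`
is constant. -/
theorem simplexMap_front (τ : D.obj (op ⦋n+1⦌)) (x' : D _⦋0⦌)
    (hfront : D.map (frontH ⦋n⦌).op τ = constSx D x' (op ⦋n⦌))
    {m : SimplexCategoryᵒᵖ} (b : Δ[n+1].obj m)
    (h : ∀ j, (b.down.toOrderHom j).val ≤ n) :
    (simplexMap τ).app m b = constSx D x' m := by
  show D.map b.down.op τ = _
  have ha : b.down = (SimplexCategory.Hom.mk
      ⟨fun j => ⟨(b.down.toOrderHom j).val, by have := h j; show _ < n + 1; omega⟩,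
        fun j j' hjj => b.down.toOrderHom.monotone hjj⟩ : m.unop ⟶ ⦋n⦌) ≫ frontH ⦋n⦌ := by
    apply SimplexCategory.Hom.ext; apply OrderHom.ext; funext j
    apply Fin.ext
    rfl
  rw [map_op_eq ha τ, op_comp, FunctorToTypes.map_comp_apply, hfront, constSx_natural]

end SimplexMapLemmas
section SmallLemmas

theorem joinH_d0 : joinH (SimplexCategory.δ (0 : Fin 2)) = SimplexCategory.δ (0 : Fin 3) := by
  apply SimplexCategory.Hom.ext; apply OrderHom.ext; funext j
  fin_cases j <;> rfl

theorem joinH_d1 : joinH (SimplexCategory.δ (1 : Fin 2)) = SimplexCategory.δ (1 : Fin 3) := by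
  apply SimplexCategory.Hom.ext; apply OrderHom.ext; funext j
  fin_cases j <;> rfl

theorem frontH_1 : frontH ⦋1⦌ = SimplexCategory.δ (2 : Fin 3) := by
  apply SimplexCategory.Hom.ext; apply OrderHom.ext; funext j
  fin_cases j <;> rfl

theorem frontH_0 : frontH ⦋0⦌ = SimplexCategory.δ (1 : Fin 2) := by
  apply SimplexCategory.Hom.ext; apply OrderHom.ext; funext j
  fin_cases j <;> rfl

theorem lastH_0 : lastH 0 = SimplexCategory.δ (0 : Fin 2) := by
  apply SimplexCategory.Hom.ext; apply OrderHom.ext; funext j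
  fin_cases j <;> rfl

theorem lastH_1 : lastH 1 = SimplexCategory.δ (0 : Fin 2) ≫ SimplexCategory.δ (0 : Fin 3) := by
  apply SimplexCategory.Hom.ext; apply OrderHom.ext; funext j
  fin_cases j <;> rfl

theorem lastH_1' : lastH 1 = SimplexCategory.δ (0 : Fin 2) ≫ SimplexCategory.δ (1 : Fin 3) := by
  apply SimplexCategory.Hom.ext; apply OrderHom.ext; funext j
  fin_cases j <;> rfl

theorem eTgt_degAt (X : SSet.{0}) (w : X _⦋0⦌) : eTgt X (degAt X w) = w := by
  have hid : SimplexCategory.δ (0 : Fin 2) ≫ SimplexCategory.σ (0 : Fin 1) =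
      𝟙 (⦋0⦌ : SimplexCategory) := SimplexCategory.δ_comp_σ_self
  show X.map (SimplexCategory.δ (0 : Fin 2)).op (X.map (SimplexCategory.σ (0 : Fin 1)).op w) = w
  rw [← FunctorToTypes.map_comp_apply, ← op_comp, hid, op_id, FunctorToTypes.map_id_apply]

theorem eSrc_degAt (X : SSet.{0}) (w : X _⦋0⦌) : eSrc X (degAt X w) = w := by
  have hid : SimplexCategory.δ (1 : Fin 2) ≫ SimplexCategory.σ (0 : Fin 1) =
      𝟙 (⦋0⦌ : SimplexCategory) := SimplexCategory.δ_comp_σ_succ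
  show X.map (SimplexCategory.δ (1 : Fin 2)).op (X.map (SimplexCategory.σ (0 : Fin 1)).op w) = w
  rw [← FunctorToTypes.map_comp_apply, ← op_comp, hid, op_id, FunctorToTypes.map_id_apply]

theorem degAt_map {X Y : SSet.{0}} (f : X ⟶ Y) (w : X _⦋0⦌) :
    f.app (op ⦋1⦌) (degAt X w) = degAt Y (f.app (op ⦋0⦌) w) := by
  unfold degAt
  rw [← FunctorToTypes.naturality]

end SmallLemmas

section Part1

variable {E B : SScaled} (p : E ⟶ B) (x z : E.carrier _⦋0⦌)

theorem part1_cart (σ : E.carrier _⦋2⦌)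
    (hlast : E.carrier.map (lastH 1).op σ = z)
    (hfront : E.carrier.map (frontH ⦋1⦌).op σ = constSx E.carrier x (op ⦋1⦌))
    (hσ : LeftInnerTri p σ) :
    IsCartEdgeSS (homRMap p.toHom x z) ⟨σ, hlast, hfront⟩ := by
  intro N h2 el hel u v hcomm huel
  have ht : (hornJoin el).1 =
      triN (N+1) (N+1-2) (N+1-1) (N+1) (by omega) (by omega) (by omega) := by
    refine ULift.down_injective ?_
    have hel' : el.1.down = (eN N (by omega)).down := congrArg ULift.down hel
    show joinH el.1.down = _
    rw [hel']
    apply SimplexCategory.Hom.ext; apply OrderHom.ext; funext j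
    fin_cases j <;> rfl
  obtain ⟨w, hw1, hw2⟩ := hσ (N+1) (by omega) (hornJoin el) ht (coneMap x z u)
    (simplexMap (v.app (op ⦋N⦌) (stdId N)).1)
    (coneMap_comp x z p.toHom u v hcomm)
    ((coneMap_hornJoin x z u el).trans (congrArg Subtype.val huel))
  exact cone_lift x z (by omega) u p.toHom v hcomm w hw1 hw2

theorem part1_cocart (σ : E.carrier _⦋2⦌)
    (hlast : E.carrier.map (lastH 1).op σ = z)
    (hfront : E.carrier.map (frontH ⦋1⦌).op σ = constSx E.carrier x (op ⦋1⦌))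
    (hσ : LeftOuterTri p σ) :
    IsCocartEdgeSS (homRMap p.toHom x z) ⟨σ, hlast, hfront⟩ := by
  intro N h2 el hel u v hcomm huel
  have ht : (hornJoin el).1 =
      triN (N+1) 0 1 (N+1) (by omega) (by omega) (by omega) := by
    refine ULift.down_injective ?_
    have hel' : el.1.down = (e01 N (by omega)).down := congrArg ULift.down hel
    show joinH el.1.down = _
    rw [hel']
    apply SimplexCategory.Hom.ext; apply OrderHom.ext; funext j
    fin_cases j <;> rfl
  obtain ⟨w, hw1, hw2⟩ := hσ (N+1) (by omega) (hornJoin el) ht (coneMap x z u)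
    (simplexMap (v.app (op ⦋N⦌) (stdId N)).1)
    (coneMap_comp x z p.toHom u v hcomm)
    ((coneMap_hornJoin x z u el).trans (congrArg Subtype.val huel))
  exact cone_lift x z (by omega) u p.toHom v hcomm w hw1 hw2

end Part1
section Part2

variable {E B : SScaled} (p : E ⟶ B) (x z : E.carrier _⦋0⦌)

/-- The underlying map of slice mapping spaces of a weak fibration is an inner fibration. -/
theorem part2_innerFib (hp : WeakFib p) : InnerFibSS (homRMap p.toHom x z) := by
  intro N iN h0 hN
  constructor
  intro u v sq
  have h2 : 2 ≤ N := by omega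
  have hi2 : iN < N + 1 + 1 := by omega
  have hiN : iN < N + 1 := by omega
  -- scaled horn
  have thinU : ∀ σS ∈ (SHorn (N+1) ⟨iN, hi2⟩ (innerScale (N+1) iN h0 hiN)).thin,
      (coneMap x z u).app (op ⦋2⦌) σS ∈ E.thin := by
    rintro σS (hdeg | hsc)
    · exact E.deg_thin _ (coneMap_deg x z u σS hdeg)
    · have hval : ∀ j, (SSet.stdSimplex.asOrderHom σS.1 j).val ≤ N := by
        have hd : σS.1.down = (SSet.stdSimplex.triangle (n := N+1)
            ⟨iN - 1, by omega⟩ ⟨iN, by omega⟩ ⟨iN + 1, by omega⟩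
            (Fin.mk_le_mk.mpr (by omega)) (Fin.mk_le_mk.mpr (by omega))).down :=
          congrArg ULift.down hsc
        intro j
        show (σS.1.down.toOrderHom j).val ≤ N
        rw [hd]
        fin_cases j
        · show iN - 1 ≤ N
          omega
        · show iN ≤ N
          omega
        · show iN + 1 ≤ N
          omega
      rw [coneMap_front x z u σS hval]
      exact E.deg_thin _ (constSx_deg _ _)
  have thinV : ∀ σS ∈ (SDelta (N+1) (innerScale (N+1) iN h0 hiN)).thin,
      (simplexMap (v.app (op ⦋N⦌) (stdId N)).1).app (op ⦋2⦌) σS ∈ B.thin := by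
    rintro σS (hdeg | hsc)
    · exact B.deg_thin _ (simplexMap_deg _ _ hdeg)
    · have hval : ∀ j, (σS.down.toOrderHom j).val ≤ N := by
        have hd : σS.down = (SSet.stdSimplex.triangle (n := N+1)
            ⟨iN - 1, by omega⟩ ⟨iN, by omega⟩ ⟨iN + 1, by omega⟩
            (Fin.mk_le_mk.mpr (by omega)) (Fin.mk_le_mk.mpr (by omega))).down :=
          congrArg ULift.down hsc
        intro j
        rw [hd]
        fin_cases j
        · show iN - 1 ≤ N
          omega
        · show iN ≤ N
          omega
        · show iN + 1 ≤ N
          omega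
      rw [simplexMap_front _ _ (v.app (op ⦋N⦌) (stdId N)).2.2 σS hval]
      exact B.deg_thin _ (constSx_deg _ _)
  obtain ⟨wS, hw1S, hw2S⟩ := hp.inner (N+1) iN (by omega) h0 hiN
    ⟨coneMap x z u, thinU⟩
    ⟨simplexMap (v.app (op ⦋N⦌) (stdId N)).1, thinV⟩
    (SHom.ext' (coneMap_comp x z p.toHom u v sq.w))
  obtain ⟨l, hl1, hl2⟩ := cone_lift x z (by omega) u p.toHom v sq.w wS.toHom
    (congrArg SHom.toHom hw1S) (congrArg SHom.toHom hw2S)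
  exact ⟨⟨⟨l, hl1, hl2⟩⟩⟩

/-- Cartesian lifting of edges in the slice mapping space, from left inner lifts. -/
theorem part2_cartlift (hli : HasLeftInnerLifts p)
    (x₀ : HomR E.carrier x z _⦋0⦌) (h : HomR B.carrier (p.toHom.app (op ⦋0⦌) x)
      (p.toHom.app (op ⦋0⦌) z) _⦋1⦌)
    (hTgt : eTgt _ h = (homRMap p.toHom x z).app (op ⦋0⦌) x₀) :
    ∃ e : HomR E.carrier x z _⦋1⦌, IsCartEdgeSS (homRMap p.toHom x z) e ∧
      (homRMap p.toHom x z).app (op ⦋1⦌) e = h ∧ eTgt (HomR E.carrier x z) e = x₀ := by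
  obtain ⟨g₀, hg1, hg2⟩ := x₀
  obtain ⟨σB, hb1, hb2⟩ := h
  have hg1' : E.carrier.map (lastH 0).op g₀ = z := hg1
  have hg2' : E.carrier.map (frontH ⦋0⦌).op g₀ = constSx E.carrier x (op ⦋0⦌) := hg2
  have hb2' : B.carrier.map (frontH ⦋1⦌).op σB =
    constSx B.carrier (p.toHom.app (op ⦋0⦌) x) (op ⦋1⦌) := hb2
  have hTgtv : B.carrier.map (joinH (SimplexCategory.δ (0 : Fin 2))).op σB =
      p.toHom.app (op ⦋1⦌) g₀ := congrArg Subtype.val hTgt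
  rw [map_op_eq joinH_d0] at hTgtv
  have hsrc : eSrc E.carrier g₀ = x := by
    show E.carrier.map (SimplexCategory.δ (1 : Fin 2)).op g₀ = x
    rw [← frontH_0, hg2', constSx_op0]
  have hend : eTgt E.carrier g₀ = z := by
    show E.carrier.map (SimplexCategory.δ (0 : Fin 2)).op g₀ = z
    rw [← lastH_0, hg1']
  obtain ⟨τ, hτL, hτp, hτ2, hτ0⟩ := hli σB (degAt E.carrier x) g₀
    (by rw [eTgt_degAt, hsrc])
    (by
      rw [degAt_map]
      unfold tFace
      rw [← frontH_1, hb2', ← degAt_eq_constSx])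
    (by unfold tFace; exact hTgtv.symm)
  have c1 : E.carrier.map (lastH 1).op τ = z := by
    rw [map_op_eq lastH_1, op_comp, FunctorToTypes.map_comp_apply]
    show eTgt E.carrier (tFace E.carrier 0 τ) = z
    rw [hτ0, hend]
  have c2 : E.carrier.map (frontH ⦋1⦌).op τ = constSx E.carrier x (op ⦋1⦌) := by
    rw [map_op_eq frontH_1]
    show tFace E.carrier 2 τ = _
    rw [hτ2, degAt_eq_constSx]
  refine ⟨⟨τ, c1, c2⟩, part1_cart p x z τ c1 c2 hτL, Subtype.ext hτp, Subtype.ext ?_⟩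
  show E.carrier.map (joinH (SimplexCategory.δ (0 : Fin 2))).op τ = g₀
  rw [map_op_eq joinH_d0]
  exact hτ0

/-- Degenerate edges are cocartesian for a weak fibration. -/
theorem degAt_cocart (hp : WeakFib p) : IsCocartEdge p (degAt E.carrier x) := by
  intro N h2 el hel u v hcomm huel
  apply hp.outer0 N h2 u v hcomm
  · intro el' hel'
    have : el' = el := Subtype.ext (hel'.trans hel.symm)
    rw [this, huel]
    exact ⟨x, rfl⟩
  · have h1 : v.toHom.app (op ⦋1⦌) (e01 N (by omega)) =
        p.toHom.app (op ⦋1⦌) (u.toHom.app (op ⦋1⦌) el) := by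
      rw [← hel]
      exact (congrArg (fun (f : SHom _ B) => f.toHom.app (op ⦋1⦌) el) hcomm).symm
    rw [h1, huel, degAt_map]
    exact ⟨p.toHom.app (op ⦋0⦌) x, rfl⟩

/-- Cocartesian lifting of edges in the slice mapping space, from left outer lifts. -/
theorem part2_cocartlift (hp : WeakFib p) (hlo : HasLeftOuterLifts p)
    (x₀ : HomR E.carrier x z _⦋0⦌) (h : HomR B.carrier (p.toHom.app (op ⦋0⦌) x)
      (p.toHom.app (op ⦋0⦌) z) _⦋1⦌)
    (hSrc : eSrc _ h = (homRMap p.toHom x z).app (op ⦋0⦌) x₀) :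
    ∃ e : HomR E.carrier x z _⦋1⦌, IsCocartEdgeSS (homRMap p.toHom x z) e ∧
      (homRMap p.toHom x z).app (op ⦋1⦌) e = h ∧ eSrc (HomR E.carrier x z) e = x₀ := by
  obtain ⟨g₀, hg1, hg2⟩ := x₀
  obtain ⟨σB, hb1, hb2⟩ := h
  have hg1' : E.carrier.map (lastH 0).op g₀ = z := hg1
  have hg2' : E.carrier.map (frontH ⦋0⦌).op g₀ = constSx E.carrier x (op ⦋0⦌) := hg2
  have hb2' : B.carrier.map (frontH ⦋1⦌).op σB =
    constSx B.carrier (p.toHom.app (op ⦋0⦌) x) (op ⦋1⦌) := hb2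
  have hSrcv : B.carrier.map (joinH (SimplexCategory.δ (1 : Fin 2))).op σB =
      p.toHom.app (op ⦋1⦌) g₀ := congrArg Subtype.val hSrc
  rw [map_op_eq joinH_d1] at hSrcv
  have hsrc : eSrc E.carrier g₀ = x := by
    show E.carrier.map (SimplexCategory.δ (1 : Fin 2)).op g₀ = x
    rw [← frontH_0, hg2', constSx_op0]
  have hend : eTgt E.carrier g₀ = z := by
    show E.carrier.map (SimplexCategory.δ (0 : Fin 2)).op g₀ = z
    rw [← lastH_0, hg1']
  obtain ⟨τ, hτL, hτp, hτ2, hτ1⟩ := hlo σB (degAt E.carrier x) g₀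
    (by rw [eSrc_degAt, hsrc])
    (by
      rw [degAt_map]
      unfold tFace
      rw [← frontH_1, hb2', ← degAt_eq_constSx])
    (by unfold tFace; exact hSrcv.symm)
    (degAt_cocart p x hp)
  have c1 : E.carrier.map (lastH 1).op τ = z := by
    rw [map_op_eq lastH_1', op_comp, FunctorToTypes.map_comp_apply]
    show eTgt E.carrier (tFace E.carrier 1 τ) = z
    rw [hτ1, hend]
  have c2 : E.carrier.map (frontH ⦋1⦌).op τ = constSx E.carrier x (op ⦋1⦌) := by
    rw [map_op_eq frontH_1]
    show tFace E.carrier 2 τ = _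
    rw [hτ2, degAt_eq_constSx]
  refine ⟨⟨τ, c1, c2⟩, part1_cocart p x z τ c1 c2 hτL, Subtype.ext hτp, Subtype.ext ?_⟩
  show E.carrier.map (joinH (SimplexCategory.δ (1 : Fin 2))).op τ = g₀
  rw [map_op_eq joinH_d1]
  exact hτ1

end Part2
theorem statement19' {E B : SScaled} (hE : InfBicat E) (hB : InfBicat B) (p : E ⟶ B)
    (hp : WeakFib p) (x z : E.carrier _⦋0⦌) :
    (∀ (σ : E.carrier _⦋2⦌)
      (hlast : E.carrier.map (lastH (Opposite.op (⦋1⦌ : SimplexCategory)).unop.len).op σ = z)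
      (hfront : E.carrier.map (frontH (Opposite.op (⦋1⦌ : SimplexCategory)).unop).op σ =
        constSx E.carrier x (op ⦋1⦌)),
      (LeftInnerTri p σ →
        IsCartEdgeSS (homRMap p.toHom x z) ⟨σ, hlast, hfront⟩) ∧
      (LeftOuterTri p σ →
        IsCocartEdgeSS (homRMap p.toHom x z) ⟨σ, hlast, hfront⟩)) ∧
    ((WeakFib p ∧ HasLeftInnerLifts p) → CartFibSS (homRMap p.toHom x z)) ∧
    ((WeakFib p ∧ HasLeftOuterLifts p) → CocartFibSS (homRMap p.toHom x z)) := by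
  refine ⟨?_, ?_, ?_⟩
  · intro σ hlast hfront
    exact ⟨part1_cart p x z σ hlast hfront, part1_cocart p x z σ hlast hfront⟩
  · rintro ⟨hw, hli⟩
    exact ⟨part2_innerFib p x z hw, fun x₀ h hT => part2_cartlift p x z hli x₀ h hT⟩
  · rintro ⟨hw, hlo⟩
    exact ⟨part2_innerFib p x z hw, fun x₀ h hT => part2_cocartlift p x z hw hlo x₀ h hT⟩




/-- For a weak fibration `p : E → B` of ∞-bicategories and objects `x,z`,
a triangle `σ` with degenerate `Δ^{0,1}`-edge (constant at `x`) and final vertex `z`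
determines an edge of `Map^▷_E(x,z)`; if `σ` is left `p`-inner this edge is
`p^▷`-cartesian, and if `σ` is left `p`-outer it is `p^▷`-cocartesian. In particular if
`p` is a left inner (resp. left outer) 2-fibration then `p^▷_{x,z}` is a cartesian
(resp. cocartesian) fibration of ∞-categories. -/
theorem statement19 {E B : SScaled} (hE : InfBicat E) (hB : InfBicat B) (p : E ⟶ B)
    (hp : WeakFib p) (x z : E.carrier _⦋0⦌) :
    (∀ (σ : E.carrier _⦋2⦌)
      (hlast : E.carrier.map (lastH (Opposite.op (⦋1⦌ : SimplexCategory)).unop.len).op σ = z)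
      (hfront : E.carrier.map (frontH (Opposite.op (⦋1⦌ : SimplexCategory)).unop).op σ =
        constSx E.carrier x (op ⦋1⦌)),
      (LeftInnerTri p σ →
        IsCartEdgeSS (homRMap p.toHom x z) ⟨σ, hlast, hfront⟩) ∧
      (LeftOuterTri p σ →
        IsCocartEdgeSS (homRMap p.toHom x z) ⟨σ, hlast, hfront⟩)) ∧
    ((WeakFib p ∧ HasLeftInnerLifts p) → CartFibSS (homRMap p.toHom x z)) ∧
    ((WeakFib p ∧ HasLeftOuterLifts p) → CocartFibSS (homRMap p.toHom x z)) := by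
  exact statement19' hE hB p hp x z

end Paper2Fib
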